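/- arXiv:1910.03745 — 8 statements merged into one kernel-verified Lean document; each statement's English description precedes it below -/
import Mathlib

section
/- If an edge-colored graph (G,c) has the property that no proper spanning subgraph H of G satisfies δ^c(H) = δ^c(G) (i.e., G is edge-minimal with respect to minimum color-degree), then there do not exist three edges {u,v}, {v,w}, {w,x} in G all assigned the same color by c. -/
open Finset

variable {V : Type*}

/-- Number of distinct colors on edges incident to `v`. -/
noncomputable def colorDeg (G : SimpleGraph V) (c : Sym2 V → ℕ) (v : V) : ℕ :=
  Set.ncard {α : ℕ | ∃ u, G.Adj u v ∧ c s(u, v) = α}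

/-- Number of distinct colors `c({u,v})` over `u ∈ N(v) ∩ U`. -/
noncomputable def colorDegOn (G : SimpleGraph V) (c : Sym2 V → ℕ) (v : V) (U : Set V) : ℕ :=
  Set.ncard {α : ℕ | ∃ u ∈ U, G.Adj u v ∧ c s(u, v) = α}

/-- Minimum color-degree `δ^c(G)`. -/
noncomputable def minColorDeg (G : SimpleGraph V) (c : Sym2 V → ℕ) : ℕ :=
  ⨅ v : V, colorDeg G c v

/-- `(G,c)` is edge-minimal: no proper spanning subgraph has the same minimum color-degree. -/
def EdgeMinimal (G : SimpleGraph V) (c : Sym2 V → ℕ) : Prop :=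
  ∀ H : SimpleGraph V, H ≤ G → H ≠ G → minColorDeg H c ≠ minColorDeg G c

/-- `(G,c)` contains a rainbow cycle on `ℓ` vertices. -/
def HasRainbowCycle (G : SimpleGraph V) (c : Sym2 V → ℕ) (ℓ : ℕ) : Prop :=
  ∃ (u : V) (p : G.Walk u u), p.IsCycle ∧ p.length = ℓ ∧ (p.edges.map c).Nodup

/-- There is a rainbow path from `v` to `y` on `k` vertices whose edge colors avoid `C`. -/
def RainbowPathAvoiding (G : SimpleGraph V) (c : Sym2 V → ℕ) (v y : V) (k : ℕ)
    (C : Set ℕ) : Prop :=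
  ∃ p : G.Walk v y, p.IsPath ∧ p.length + 1 = k ∧ (p.edges.map c).Nodup ∧
    ∀ e ∈ p.edges, c e ∉ C

/-- `σ_{v,X}(y)`: the number of colors `X`-separating `y` from `v`. -/
noncomputable def sepCount (G : SimpleGraph V) (c : Sym2 V → ℕ) (v : V) (X : Set V)
    (y : V) : ℕ :=
  Set.ncard {α : ℕ | ∃ x ∈ X, G.Adj x y ∧ c s(x, y) = α ∧ c s(v, x) ≠ α}

/-- `ρ_{v,X}(y)`: the number of colors restricted for `y` by `(v,X)`. -/
noncomputable def restrCount (G : SimpleGraph V) (c : Sym2 V → ℕ) (v : V) (X : Set V)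
    (y : V) : ℕ :=
  Set.ncard {α : ℕ | (∃ x ∈ X, G.Adj x y ∧ c s(x, y) = α ∧ c s(v, x) ≠ α) ∧
    ∀ w, G.Adj w y → w ∉ X → c s(w, y) ≠ α}

/-- The replication number `R(G,c) = max_{v,α} |N_α(v)|`. -/
noncomputable def repNum (G : SimpleGraph V) (c : Sym2 V → ℕ) : ℕ :=
  ⨆ v : V, ⨆ α : ℕ, Set.ncard {u : V | G.Adj u v ∧ c s(u, v) = α}

/-- `N_!(v)`: neighbors `u` of `v` whose color `c({u,v})` appears on exactly one edge at `v`. -/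
def bangNbhd (G : SimpleGraph V) (c : Sym2 V → ℕ) (v : V) : Set V :=
  {u : V | G.Adj u v ∧ Set.ncard {w : V | G.Adj w v ∧ c s(w, v) = c s(u, v)} = 1}

/-! Deleting the middle edge `vw` of a monochromatic path `uvwx` changes no color-degree: its
color is still seen at `v` through `uv` and at `w` through `wx`. So `G - vw` is a proper spanning
subgraph with the same minimum color-degree. -/

section DeleteEdge

variable {G : SimpleGraph V} {c : Sym2 V → ℕ} {v w : V}

lemma colorDeg_deleteEdge_eq
    (hv : ∃ a, G.Adj a v ∧ a ≠ w ∧ c s(a, v) = c s(v, w))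
    (hw : ∃ b, G.Adj b w ∧ b ≠ v ∧ c s(b, w) = c s(v, w)) (y : V) :
    colorDeg (G.deleteEdges {s(v, w)}) c y = colorDeg G c y := by
  obtain ⟨a, hav, haw, hca⟩ := hv
  obtain ⟨b, hbw, hbv, hcb⟩ := hw
  unfold colorDeg
  congr 1
  ext α
  simp only [Set.mem_ofPred_eq, SimpleGraph.deleteEdges_adj, Set.mem_singleton_iff]
  constructor
  · rintro ⟨z, ⟨hzy, -⟩, hcz⟩
    exact ⟨z, hzy, hcz⟩
  · rintro ⟨z, hzy, rfl⟩
    by_cases hs : s(z, y) = s(v, w)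
    · rcases Sym2.eq_iff.mp hs with ⟨rfl, rfl⟩ | ⟨rfl, rfl⟩
      · refine ⟨b, ⟨hbw, fun h => hbv ?_⟩, hcb⟩
        rcases Sym2.eq_iff.mp h with ⟨rfl, -⟩ | ⟨-, rfl⟩
        · rfl
        · exact absurd rfl hzy.ne
      · refine ⟨a, ⟨hav, fun h => haw ?_⟩, by rw [hca, Sym2.eq_swap]⟩
        rcases Sym2.eq_iff.mp h with ⟨-, rfl⟩ | ⟨rfl, -⟩
        · exact absurd rfl hzy.ne
        · rfl
    · exact ⟨z, ⟨hzy, hs⟩, rfl⟩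

lemma minColorDeg_deleteEdge_eq
    (hv : ∃ a, G.Adj a v ∧ a ≠ w ∧ c s(a, v) = c s(v, w))
    (hw : ∃ b, G.Adj b w ∧ b ≠ v ∧ c s(b, w) = c s(v, w)) :
    minColorDeg (G.deleteEdges {s(v, w)}) c = minColorDeg G c :=
  iInf_congr (colorDeg_deleteEdge_eq hv hw)

lemma deleteEdge_ne_self (hvw : G.Adj v w) : G.deleteEdges {s(v, w)} ≠ G := by
  rw [Ne, SimpleGraph.deleteEdges_eq_self, Set.disjoint_singleton_right, not_not]
  exact hvw

end DeleteEdge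

theorem stmt0_general (G : SimpleGraph V) (c : Sym2 V → ℕ)
    (hmin : ∀ H : SimpleGraph V, H ≤ G → H ≠ G → minColorDeg H c ≠ minColorDeg G c) :
    ¬ ∃ u v w x : V, G.Adj u v ∧ G.Adj v w ∧ G.Adj w x ∧
      s(u, v) ≠ s(v, w) ∧ s(v, w) ≠ s(w, x) ∧ s(u, v) ≠ s(w, x) ∧
      c s(u, v) = c s(v, w) ∧ c s(v, w) = c s(w, x) := by
  rintro ⟨u, v, w, x, huv, hvw, hwx, huv_vw, hvw_wx, -, hc_uv, hc_wx⟩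
  have hv : ∃ a, G.Adj a v ∧ a ≠ w ∧ c s(a, v) = c s(v, w) :=
    ⟨u, huv, by rintro rfl; exact huv_vw Sym2.eq_swap, hc_uv⟩
  have hw : ∃ b, G.Adj b w ∧ b ≠ v ∧ c s(b, w) = c s(v, w) :=
    ⟨x, hwx.symm, by rintro rfl; exact hvw_wx Sym2.eq_swap, by rw [hc_wx, Sym2.eq_swap]⟩
  exact hmin _ (G.deleteEdges_le _) (deleteEdge_ne_self hvw) (minColorDeg_deleteEdge_eq hv hw)

theorem stmt0 [Fintype V] (G : SimpleGraph V) (c : Sym2 V → ℕ)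
    (hmin : ∀ H : SimpleGraph V, H ≤ G → H ≠ G → minColorDeg H c ≠ minColorDeg G c) :
    ¬ ∃ u v w x : V, G.Adj u v ∧ G.Adj v w ∧ G.Adj w x ∧
      s(u, v) ≠ s(v, w) ∧ s(v, w) ≠ s(w, x) ∧ s(u, v) ≠ s(w, x) ∧
      c s(u, v) = c s(v, w) ∧ c s(v, w) = c s(w, x) :=
  stmt0_general G c hmin
end

section
/- Let (G,c) be an n-vertex edge-colored graph with δ^c(G) ≥ (n+1)/2. Then G contains a rainbow triangle, i.e., three vertices x, y, z pairwise adjacent with c({x,y}), c({y,z}), c({x,z}) pairwise distinct. -/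
open Finset

variable {V : Type*}

/-! For `z ∈ S` let `B(z)` be the neighbours `v` of `z` at which the colour of `zv` appears on no
other edge into `S`: deleting `z` from `S` lowers the colour-degree of each vertex of `B(z)` by at
most one and leaves the other colour-degrees unchanged. Without rainbow triangles, adjacent vertices
of `B(z)` see `z` in the same colour, so `u ∈ B(z)` has no neighbour among the vertices of `B(z)` of
other colours. Counting over these colour classes shows that a vertex `z` of minimum degree
satisfies `d^c(z) + |B(z)| ≤ |S|`. Deleting such vertices one at a time gives
`2 ∑ d^c(v) ≤ n(n + 1) - 2`, whereas `δ^c ≥ (n + 1)/2` forces `2 ∑ d^c(v) ≥ n(n + 1)`. -/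

namespace SimpleGraph

variable {κ : Type*}

def IsRainbowTriangleFree (G : SimpleGraph V) (c : Sym2 V → κ) : Prop :=
  ∀ x y z, G.Adj x y → G.Adj y z → G.Adj x z →
    c s(x, y) = c s(y, z) ∨ c s(y, z) = c s(x, z) ∨ c s(x, y) = c s(x, z)

section Palette

variable (G : SimpleGraph V) [DecidableRel G.Adj] (c : Sym2 V → κ)

def nbhdIn (S : Finset V) (v : V) : Finset V := {u ∈ S | G.Adj u v}

def paletteIn [DecidableEq κ] (S : Finset V) (v : V) : Finset κ :=
  (G.nbhdIn S v).image fun u ↦ c s(u, v)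

def uniqueColorNbhd [DecidableEq V] [DecidableEq κ] (S : Finset V) (z : V) : Finset V :=
  {v ∈ G.nbhdIn S z | ∀ u ∈ G.nbhdIn S v, c s(u, v) = c s(z, v) → u = z}

variable {G c} {S : Finset V} {u v w z : V}

@[simp]
lemma mem_nbhdIn : u ∈ G.nbhdIn S v ↔ u ∈ S ∧ G.Adj u v := mem_filter

lemma nbhdIn_subset : G.nbhdIn S v ⊆ S := filter_subset _ _

variable [DecidableEq V] [DecidableEq κ]

lemma uniqueColorNbhd_subset : G.uniqueColorNbhd c S z ⊆ G.nbhdIn S z := filter_subset _ _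

lemma color_eq_of_adj_of_mem_uniqueColorNbhd (hc : G.IsRainbowTriangleFree c)
    (hu : u ∈ G.uniqueColorNbhd c S z) (hw : w ∈ G.uniqueColorNbhd c S z) (huw : G.Adj u w) :
    c s(u, z) = c s(w, z) := by
  simp only [uniqueColorNbhd, mem_filter, mem_nbhdIn] at hu hw
  obtain ⟨⟨huS, huz⟩, hu⟩ := hu
  obtain ⟨⟨hwS, hwz⟩, hw⟩ := hw
  rcases hc u z w huz hwz.symm huw with h | h | h
  · rw [h, Sym2.eq_swap]
  · exact absurd (hw u ⟨huS, huw⟩ h.symm) huz.ne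
  · exact absurd (hu w ⟨hwS, huw.symm⟩ (by rw [Sym2.eq_swap, ← h, Sym2.eq_swap])) hwz.ne

/-- `N(u)`, `u` and the vertices of `B(z) = uniqueColorNbhd c S z` of another colour than `u` are
disjoint subsets of `S`. -/
lemma card_nbhdIn_add_card_uniqueColorNbhd_lt (hc : G.IsRainbowTriangleFree c)
    (hu : u ∈ G.uniqueColorNbhd c S z) :
    #(G.nbhdIn S u) + #(G.uniqueColorNbhd c S z) <
      #S + #{v ∈ G.uniqueColorNbhd c S z | c s(v, z) = c s(u, z)} := by
  set B := G.uniqueColorNbhd c S z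
  set Q := {v ∈ B | ¬c s(v, z) = c s(u, z)}
  have hBQ : #{v ∈ B | c s(v, z) = c s(u, z)} + #Q = #B := card_filter_add_card_filter_not _
  have huQ : u ∉ Q := by simp [Q]
  have hdisj : Disjoint (G.nbhdIn S u) (insert u Q) := by
    refine disjoint_insert_right.mpr ⟨fun h ↦ G.irrefl (mem_nbhdIn.mp h).2, ?_⟩
    refine Finset.disjoint_left.mpr fun w hwu hwQ ↦ ?_
    obtain ⟨hwB, hwc⟩ := mem_filter.mp hwQ
    exact hwc (color_eq_of_adj_of_mem_uniqueColorNbhd hc hwB hu (mem_nbhdIn.mp hwu).2)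
  have hsub : G.nbhdIn S u ∪ insert u Q ⊆ S := by
    refine union_subset nbhdIn_subset (insert_subset ?_ ?_)
    · exact nbhdIn_subset (uniqueColorNbhd_subset hu)
    · exact (filter_subset _ _).trans (uniqueColorNbhd_subset.trans nbhdIn_subset)
  have := card_le_card hsub
  rw [card_union_of_disjoint hdisj, card_insert_of_notMem huQ] at this
  omega

lemma card_paletteIn_add_card_uniqueColorNbhd_le :
    #(G.paletteIn c S z) + #(G.uniqueColorNbhd c S z) ≤
      #((G.uniqueColorNbhd c S z).image fun v ↦ c s(v, z)) + #(G.nbhdIn S z) := by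
  have hB : G.uniqueColorNbhd c S z ⊆ G.nbhdIn S z := uniqueColorNbhd_subset
  have hpal : G.paletteIn c S z = ((G.uniqueColorNbhd c S z).image fun v ↦ c s(v, z)) ∪
      ((G.nbhdIn S z \ G.uniqueColorNbhd c S z).image fun v ↦ c s(v, z)) := by
    rw [← image_union, union_sdiff_of_subset hB, paletteIn]
  have := card_image_le (s := G.nbhdIn S z \ G.uniqueColorNbhd c S z) (f := fun v ↦ c s(v, z))
  have := card_sdiff_add_card_eq_card hB
  rw [hpal]
  grw [card_union_le]
  omega

lemma card_paletteIn_add_card_uniqueColorNbhd_le_card (hc : G.IsRainbowTriangleFree c)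
    (hz : z ∈ S) (hmin : ∀ y ∈ S, #(G.nbhdIn S z) ≤ #(G.nbhdIn S y)) :
    #(G.paletteIn c S z) + #(G.uniqueColorNbhd c S z) ≤ #S := by
  set B := G.uniqueColorNbhd c S z
  set f : V → κ := fun v ↦ c s(v, z)
  have hpal : #(G.paletteIn c S z) + #B ≤ #(B.image f) + #(G.nbhdIn S z) :=
    card_paletteIn_add_card_uniqueColorNbhd_le
  have hD : #(G.nbhdIn S z) < #S :=
    card_lt_card ⟨nbhdIn_subset, fun h ↦ G.irrefl (mem_nbhdIn.mp (h hz)).2⟩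
  have hmb : #(B.image f) ≤ #B := card_image_le
  have hclass : ∀ γ ∈ B.image f, #(G.nbhdIn S z) + #B < #S + #{v ∈ B | f v = γ} := by
    intro γ hγ
    obtain ⟨u, hu, rfl⟩ := mem_image.mp hγ
    have : #(G.nbhdIn S u) + #B < #S + #{v ∈ B | f v = f u} :=
      card_nbhdIn_add_card_uniqueColorNbhd_lt hc hu
    have := hmin u (nbhdIn_subset (uniqueColorNbhd_subset hu))
    omega
  have hsum : #(B.image f) * (#(G.nbhdIn S z) + #B + 1) ≤ #(B.image f) * #S + #B := by
    calc #(B.image f) * (#(G.nbhdIn S z) + #B + 1)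
        = ∑ _γ ∈ B.image f, (#(G.nbhdIn S z) + #B + 1) := by rw [sum_const, smul_eq_mul]
      _ ≤ ∑ γ ∈ B.image f, (#S + #{v ∈ B | f v = γ}) := sum_le_sum hclass
      _ = #(B.image f) * #S + #B := by
        rw [sum_add_distrib, ← card_eq_sum_card_image, sum_const, smul_eq_mul]
  by_contra! hlarge
  -- with `m = #(B.image f)`: `#S < m + #N(z)` and `m ≤ #B`, so `hsum` gives `#B ≥ m (#B - m + 2)`
  nlinarith

lemma paletteIn_subset_insert_paletteIn_erase :
    G.paletteIn c S v ⊆ insert (c s(z, v)) (G.paletteIn c (S.erase z) v) := by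
  intro γ hγ
  simp only [paletteIn, mem_image, mem_nbhdIn] at hγ
  obtain ⟨u, ⟨huS, huv⟩, rfl⟩ := hγ
  rcases eq_or_ne u z with rfl | huz
  · exact mem_insert_self _ _
  · exact mem_insert_of_mem (mem_image_of_mem _ (mem_nbhdIn.mpr ⟨mem_erase.mpr ⟨huz, huS⟩, huv⟩))

lemma paletteIn_subset_paletteIn_erase (hv : v ∈ S) (hvB : v ∉ G.uniqueColorNbhd c S z) :
    G.paletteIn c S v ⊆ G.paletteIn c (S.erase z) v := by
  intro γ hγ
  simp only [paletteIn, mem_image, mem_nbhdIn, mem_erase] at hγ ⊢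
  obtain ⟨u, ⟨huS, huv⟩, rfl⟩ := hγ
  rcases eq_or_ne u z with rfl | huz
  · simp only [uniqueColorNbhd, mem_filter, mem_nbhdIn, not_and, not_forall] at hvB
    obtain ⟨w, ⟨hwS, hwv⟩, hwc, hwu⟩ := hvB ⟨hv, huv.symm⟩
    exact ⟨w, ⟨⟨hwu, hwS⟩, hwv⟩, hwc⟩
  · exact ⟨u, ⟨⟨huz, huS⟩, huv⟩, rfl⟩

lemma uniqueColorNbhd_subset_erase : G.uniqueColorNbhd c S z ⊆ S.erase z := fun _ hv ↦
  have ⟨hvS, hvz⟩ := mem_nbhdIn.mp (uniqueColorNbhd_subset hv)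
  mem_erase.mpr ⟨hvz.ne, hvS⟩

lemma sum_card_paletteIn_le_sum_card_paletteIn_erase_add :
    ∑ v ∈ S.erase z, #(G.paletteIn c S v) ≤
      ∑ v ∈ S.erase z, #(G.paletteIn c (S.erase z) v) + #(G.uniqueColorNbhd c S z) := by
  calc ∑ v ∈ S.erase z, #(G.paletteIn c S v)
      ≤ ∑ v ∈ S.erase z, (#(G.paletteIn c (S.erase z) v) +
          if v ∈ G.uniqueColorNbhd c S z then 1 else 0) := by
        refine sum_le_sum fun v hv ↦ ?_
        split_ifs with hvB
        · exact (card_le_card paletteIn_subset_insert_paletteIn_erase).trans (card_insert_le _ _)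
        · exact card_le_card (paletteIn_subset_paletteIn_erase (mem_of_mem_erase hv) hvB)
    _ = ∑ v ∈ S.erase z, #(G.paletteIn c (S.erase z) v) + #(G.uniqueColorNbhd c S z) := by
        rw [sum_add_distrib, sum_ite_mem, inter_eq_right.mpr uniqueColorNbhd_subset_erase,
          sum_const, smul_eq_mul, mul_one]

theorem two_mul_sum_card_paletteIn_add_two_le (hc : G.IsRainbowTriangleFree c)
    (hS : S.Nonempty) : 2 * ∑ v ∈ S, #(G.paletteIn c S v) + 2 ≤ #S * (#S + 1) := by
  induction hS using Finset.Nonempty.strong_induction with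
  | h₀ a => simp [paletteIn, nbhdIn]
  | @h₁ S hS ih =>
    obtain ⟨z, hz, hmin⟩ := S.exists_min_image (fun y ↦ #(G.nbhdIn S y)) hS.nonempty
    have hIH := ih _ hS.erase_nonempty (erase_ssubset hz)
    have hkey := card_paletteIn_add_card_uniqueColorNbhd_le_card hc hz hmin
    have hdel :=
      sum_card_paletteIn_le_sum_card_paletteIn_erase_add (G := G) (c := c) (S := S) (z := z)
    rw [← card_erase_add_one hz] at hkey ⊢
    rw [← add_sum_erase S _ hz]
    nlinarith

end Palette

end SimpleGraph

lemma colorDeg_eq_card_paletteIn [Fintype V] (G : SimpleGraph V) [DecidableRel G.Adj]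
    (c : Sym2 V → ℕ) (v : V) : colorDeg G c v = #(G.paletteIn c univ v) := by
  rw [colorDeg, ← Set.ncard_coe_finset]
  congr 1
  ext α
  simp [SimpleGraph.paletteIn, SimpleGraph.nbhdIn]

lemma card_add_one_le_two_mul_colorDeg [Fintype V] {G : SimpleGraph V} {c : Sym2 V → ℕ}
    (hδ : ((Fintype.card V : ℚ) + 1) / 2 ≤ (minColorDeg G c : ℚ)) (v : V) :
    Fintype.card V + 1 ≤ 2 * colorDeg G c v := by
  have hmin : (minColorDeg G c : ℚ) ≤ colorDeg G c v := by
    exact_mod_cast ciInf_le (OrderBot.bddBelow _) v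
  have : ((Fintype.card V : ℚ) + 1) ≤ 2 * colorDeg G c v := by linarith
  exact_mod_cast this

theorem stmt2 [Fintype V] (G : SimpleGraph V) (c : Sym2 V → ℕ)
    (hδ : ((Fintype.card V : ℚ) + 1) / 2 ≤ (minColorDeg G c : ℚ)) :
    ∃ x y z : V, G.Adj x y ∧ G.Adj y z ∧ G.Adj x z ∧
      c s(x, y) ≠ c s(y, z) ∧ c s(y, z) ≠ c s(x, z) ∧ c s(x, y) ≠ c s(x, z) := by
  classical
  by_contra! hfree
  have hc : G.IsRainbowTriangleFree c := fun x y z hxy hyz hxz ↦ by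
    by_contra! h
    exact h.2.2 (hfree x y z hxy hyz hxz h.1 h.2.1)
  have : Nonempty V := by
    by_contra hV
    rw [not_nonempty_iff] at hV
    norm_num [minColorDeg] at hδ
  have hupper := G.two_mul_sum_card_paletteIn_add_two_le hc (univ_nonempty (α := V))
  have hlower : #(univ : Finset V) * (#(univ : Finset V) + 1) ≤
      2 * ∑ v, #(G.paletteIn c univ v) := by
    calc #(univ : Finset V) * (#(univ : Finset V) + 1) = ∑ _v : V, (Fintype.card V + 1) := by
          simp
      _ ≤ ∑ v, 2 * colorDeg G c v := sum_le_sum fun v _ ↦ card_add_one_le_two_mul_colorDeg hδ v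
      _ = 2 * ∑ v, #(G.paletteIn c univ v) := by simp [mul_sum, colorDeg_eq_card_paletteIn]
  omega
end

section
/- Let (G,c) be an n-vertex edge-minimal edge-colored graph containing no rainbow triangle. Suppose z is a vertex and ζ a color maximizing |N_ζ(z)| = R over all vertex-color pairs, and suppose N_!(z) is nonempty, where N_!(z) is the set of neighbors u of z such that the color c({u,z}) appears on exactly one edge at z. Then there exists a vertex y₀ ∈ N(z) such that the number of distinct colors that y₀ sends into the closed neighborhood N[z] is at most R. -/
/-!
Suppose every `y ∈ N(z)` sends more than `R` colors into `N[z]`, and orient an edge `u → y`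
inside `B = N_!(z)` when `c(uy) = c(uz)`. For `y ∈ B` and `u ∈ N(z)` with `c(uy) ≠ c(yz)`, the
triangle `uzy` is not rainbow and `c(uz) ≠ c(yz)`, so `c(uy) = c(uz)`; edge-minimality then puts
`u` into `B` (otherwise `uz` could be deleted). Hence every `y ∈ B` has in-degree at least `R`.
On the other hand the out-neighbours of `u`, together with `z`, lie in `N_{c(uz)}(u)`, so every
out-degree is at most `R - 1`, which is impossible in a nonempty finite digraph.
-/

open Finset

variable {V : Type*}

theorem Finset.exists_le_card_bipartiteBelow {α : Type*} {s : Finset α} (hs : s.Nonempty)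
    (r : α → α → Prop) [∀ a b, Decidable (r a b)] {m : ℕ}
    (hm : ∀ a ∈ s, m ≤ #(s.bipartiteAbove r a)) :
    ∃ b ∈ s, m ≤ #(s.bipartiteBelow r b) := by
  by_contra! h
  have hbelow := Finset.sum_lt_sum_of_nonempty hs h
  have habove := Finset.sum_le_sum hm
  rw [sum_card_bipartiteAbove_eq_sum_card_bipartiteBelow] at habove
  omega

section ColoredGraph

variable {G : SimpleGraph V} {c : Sym2 V → ℕ}

theorem eq_of_mem_bangNbhd {u v y : V} (hy : y ∈ bangNbhd G c v) (hu : G.Adj u v)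
    (hc : c s(u, v) = c s(y, v)) : u = y := by
  obtain ⟨a, ha⟩ := Set.ncard_eq_one.mp hy.2
  have hu' : u ∈ {w : V | G.Adj w v ∧ c s(w, v) = c s(y, v)} := ⟨hu, hc⟩
  have hy' : y ∈ {w : V | G.Adj w v ∧ c s(w, v) = c s(y, v)} := ⟨hy.1, rfl⟩
  rw [ha, Set.mem_singleton_iff] at hu' hy'
  rw [hu', hy']

theorem color_eq_of_mem_bangNbhd
    (hno : ¬ ∃ x y z : V, G.Adj x y ∧ G.Adj y z ∧ G.Adj x z ∧
      c s(x, y) ≠ c s(y, z) ∧ c s(y, z) ≠ c s(x, z) ∧ c s(x, y) ≠ c s(x, z))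
    {u y z : V} (hy : y ∈ bangNbhd G c z) (huz : G.Adj u z) (huy : G.Adj u y)
    (hη : c s(u, y) ≠ c s(y, z)) : c s(u, y) = c s(u, z) := by
  have hcz : c s(u, z) ≠ c s(y, z) := fun h => G.ne_of_adj huy (eq_of_mem_bangNbhd hy huz h)
  by_contra hc
  exact hno ⟨u, z, y, huz, hy.1.symm, huy, by rwa [Sym2.eq_swap (a := z)],
    by rwa [Sym2.eq_swap (a := z), ne_comm], Ne.symm hc⟩

theorem colorDeg_deleteEdges_eq {u v : V}
    (hu : ∃ y, G.Adj y u ∧ y ≠ v ∧ c s(y, u) = c s(u, v))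
    (hv : ∃ w, G.Adj w v ∧ w ≠ u ∧ c s(w, v) = c s(u, v)) (x : V) :
    colorDeg (G.deleteEdges {s(u, v)}) c x = colorDeg G c x := by
  obtain ⟨y, hyu, hyv, hcy⟩ := hu
  obtain ⟨w, hwv, hwu, hcw⟩ := hv
  unfold colorDeg
  congr 1
  ext α
  simp only [Set.mem_ofPred_eq, SimpleGraph.deleteEdges_adj, Set.mem_singleton_iff]
  refine ⟨fun ⟨a, ha, hca⟩ => ⟨a, ha.1, hca⟩, fun ⟨a, ha, hca⟩ => ?_⟩
  by_cases he : s(a, x) = s(u, v)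
  · rcases Sym2.eq_iff.mp he with ⟨rfl, rfl⟩ | ⟨rfl, rfl⟩
    · refine ⟨w, ⟨hwv, fun h => ?_⟩, hcw.trans hca⟩
      rcases Sym2.eq_iff.mp h with ⟨h, -⟩ | ⟨h, -⟩
      exacts [hwu h, G.ne_of_adj hwv h]
    · refine ⟨y, ⟨hyu, fun h => ?_⟩, ?_⟩
      · rcases Sym2.eq_iff.mp h with ⟨-, h⟩ | ⟨h, -⟩
        exacts [G.ne_of_adj ha h.symm, hyv h]
      · rw [hcy, ← hca, Sym2.eq_swap]
  · exact ⟨a, ⟨ha, he⟩, hca⟩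

theorem EdgeMinimal.mem_bangNbhd (hmin : EdgeMinimal G c) {u v y : V} (huv : G.Adj u v)
    (huy : G.Adj u y) (hyv : y ≠ v) (hc : c s(u, y) = c s(u, v)) : u ∈ bangNbhd G c v := by
  refine ⟨huv, ?_⟩
  by_contra hne
  obtain ⟨w, ⟨hwv, hwc⟩, hwu⟩ : ∃ w ∈ {w : V | G.Adj w v ∧ c s(w, v) = c s(u, v)}, w ≠ u := by
    by_contra! h
    exact hne (Set.ncard_eq_one.mpr ⟨u, Set.eq_singleton_iff_unique_mem.mpr ⟨⟨huv, rfl⟩, h⟩⟩)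
  have hdel : G.deleteEdges {s(u, v)} ≠ G := fun h =>
    (SimpleGraph.deleteEdges_eq_self.mp h).notMem_of_mem_left (G.mem_edgeSet.mpr huv) rfl
  refine hmin _ (G.deleteEdges_le _) hdel (iInf_congr fun x => colorDeg_deleteEdges_eq ?_ ?_ x)
  · exact ⟨y, huy.symm, hyv, by rw [Sym2.eq_swap, hc]⟩
  · exact ⟨w, hwv, hwu, hwc⟩

variable [Fintype V]

open Classical in
theorem colorDegOn_insert_neighborSet_le (hmin : EdgeMinimal G c)
    (hno : ¬ ∃ x y z : V, G.Adj x y ∧ G.Adj y z ∧ G.Adj x z ∧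
      c s(x, y) ≠ c s(y, z) ∧ c s(y, z) ≠ c s(x, z) ∧ c s(x, y) ≠ c s(x, z))
    {y z : V} (hy : y ∈ bangNbhd G c z) :
    colorDegOn G c y (insert z (G.neighborSet z)) ≤
      #{u ∈ (bangNbhd G c z).toFinset | G.Adj u y ∧ c s(u, y) = c s(u, z)} + 1 := by
  set In := {u ∈ (bangNbhd G c z).toFinset | G.Adj u y ∧ c s(u, y) = c s(u, z)}
  have hsub : {α | ∃ u ∈ insert z (G.neighborSet z), G.Adj u y ∧ c s(u, y) = α} ⊆
      insert (c s(y, z)) (↑(In.image fun u => c s(u, z)) : Set ℕ) := by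
    rintro _ ⟨u, hu, huy, rfl⟩
    by_cases hη : c s(u, y) = c s(y, z)
    · exact Or.inl hη
    have huz : G.Adj u z := by
      rcases hu with rfl | hu
      · exact absurd (congrArg c Sym2.eq_swap) hη
      · exact hu.symm
    have hc := color_eq_of_mem_bangNbhd hno hy huz huy hη
    have huB := hmin.mem_bangNbhd huz huy (G.ne_of_adj hy.1) hc
    exact Or.inr (Finset.mem_coe.mpr (Finset.mem_image.mpr
      ⟨u, Finset.mem_filter.mpr ⟨Set.mem_toFinset.mpr huB, huy, hc⟩, hc.symm⟩))
  calc colorDegOn G c y (insert z (G.neighborSet z))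
      ≤ (insert (c s(y, z)) (↑(In.image fun u => c s(u, z)) : Set ℕ)).ncard :=
        Set.ncard_le_ncard hsub (Set.toFinite _)
    _ ≤ #(In.image fun u => c s(u, z)) + 1 := by
        grw [Set.ncard_insert_le, Set.ncard_coe_finset]
    _ ≤ #In + 1 := by grw [Finset.card_image_le]

open Classical in
theorem card_filter_sameColor_add_one_le {u z : V} (huz : G.Adj u z) {s : Finset V}
    (hz : z ∉ s) :
    #{y ∈ s | G.Adj u y ∧ c s(u, y) = c s(u, z)} + 1 ≤
      Set.ncard {w : V | G.Adj w u ∧ c s(w, u) = c s(u, z)} := by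
  set Out := {y ∈ s | G.Adj u y ∧ c s(u, y) = c s(u, z)}
  have hzOut : z ∉ Out := fun h => hz (Finset.mem_filter.mp h).1
  have hsub : (↑(insert z Out) : Set V) ⊆ {w : V | G.Adj w u ∧ c s(w, u) = c s(u, z)} := by
    intro x hx
    rcases Finset.mem_insert.mp hx with rfl | hx
    · exact ⟨huz.symm, congrArg c Sym2.eq_swap⟩
    · obtain ⟨-, hux, hc⟩ := Finset.mem_filter.mp hx
      exact ⟨hux.symm, by rw [Sym2.eq_swap, hc]⟩
  rw [← Finset.card_insert_of_notMem hzOut, ← Set.ncard_coe_finset]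
  exact Set.ncard_le_ncard hsub (Set.toFinite _)

end ColoredGraph

theorem stmt3_general [Fintype V] (G : SimpleGraph V) (c : Sym2 V → ℕ)
    (hmin : EdgeMinimal G c)
    (hno : ¬ ∃ x y z : V, G.Adj x y ∧ G.Adj y z ∧ G.Adj x z ∧
      c s(x, y) ≠ c s(y, z) ∧ c s(y, z) ≠ c s(x, z) ∧ c s(x, y) ≠ c s(x, z))
    (z : V) (R : ℕ)
    (hmax : ∀ (v : V) (α : ℕ), Set.ncard {u : V | G.Adj u v ∧ c s(u, v) = α} ≤ R)
    (hbang : (bangNbhd G c z).Nonempty) :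
    ∃ y₀ : V, G.Adj y₀ z ∧ colorDegOn G c y₀ (insert z (G.neighborSet z)) ≤ R := by
  classical
  by_contra! hcon
  let B := (bangNbhd G c z).toFinset
  have hin : ∀ y ∈ B, R ≤ #{u ∈ B | G.Adj u y ∧ c s(u, y) = c s(u, z)} := fun y hy =>
    have hy := Set.mem_toFinset.mp hy
    Nat.le_of_lt_succ ((hcon y hy.1).trans_le (colorDegOn_insert_neighborSet_le hmin hno hy))
  obtain ⟨u, hu, hout⟩ := Finset.exists_le_card_bipartiteBelow (by simpa [B] using hbang)
    (fun y u => G.Adj u y ∧ c s(u, y) = c s(u, z)) hin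
  have hzB : z ∉ B := fun h => G.irrefl (Set.mem_toFinset.mp h).1
  have hout_lt : #(B.bipartiteBelow (fun y u => G.Adj u y ∧ c s(u, y) = c s(u, z)) u) < R :=
    (card_filter_sameColor_add_one_le (Set.mem_toFinset.mp hu).1 hzB).trans (hmax u _)
  exact (hout.trans_lt hout_lt).false

theorem stmt3 [Fintype V] (G : SimpleGraph V) (c : Sym2 V → ℕ)
    (hmin : EdgeMinimal G c)
    (hno : ¬ ∃ x y z : V, G.Adj x y ∧ G.Adj y z ∧ G.Adj x z ∧
      c s(x, y) ≠ c s(y, z) ∧ c s(y, z) ≠ c s(x, z) ∧ c s(x, y) ≠ c s(x, z))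
    (z : V) (ζ : ℕ) (R : ℕ)
    (hR : Set.ncard {u : V | G.Adj u z ∧ c s(u, z) = ζ} = R)
    (hmax : ∀ (v : V) (α : ℕ), Set.ncard {u : V | G.Adj u v ∧ c s(u, v) = α} ≤ R)
    (hbang : (bangNbhd G c z).Nonempty) :
    ∃ y₀ : V, G.Adj y₀ z ∧ colorDegOn G c y₀ (insert z (G.neighborSet z)) ≤ R :=
  stmt3_general G c hmin hno z R hmax hbang
end

section
/- Let (G,c) be an n-vertex edge-minimal edge-colored graph with replication number R, let v be a vertex, X ⊆ N(v), and Y a nonempty subset of V \ {v}. Then the average over y ∈ Y of ρ_{v,X}(y) is at least δ^c(G) + |X| − n − (R−1)·|X ∩ N_!(v)|/|Y|, and the same lower bound holds for the average of σ_{v,X}(y). -/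
open Finset

variable {V : Type*}

/-!
Fix `y ∈ Y`. Every color at `y` is either the color of an edge from outside `X` (at most
`n - |X|` colors), or restricted for `y` by `(v, X)`, or of the form `c(xy) = c(vx)` with `x ∈ X`;
hence `δ^c + |X| ≤ n + ρ(y) + #{x ∈ X | c(xy) = c(vx)}`. Summing over `Y` and counting the
pairs `(x, y)` from the side of `x` instead: the `y ≠ v` with `c(xy) = c(vx)` lie in
`N_{c(vx)}(x) \ {v}`, so there are at most `R - 1` of them, and none at all unless
`x ∈ N_!(v)`, because edge-minimality forbids an edge whose color is repeated at both ends.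
-/

/-- `N_α(v)`. -/
def colorNbhd (G : SimpleGraph V) (c : Sym2 V → ℕ) (v : V) (α : ℕ) : Set V :=
  {u | G.Adj u v ∧ c s(u, v) = α}

/-- `sepCount` and `restrCount` are, by `rfl`, the `ncard`s of `sepColors` and `restrColors`. -/
def sepColors (G : SimpleGraph V) (c : Sym2 V → ℕ) (v : V) (X : Set V) (y : V) : Set ℕ :=
  {α | ∃ x ∈ X, G.Adj x y ∧ c s(x, y) = α ∧ c s(v, x) ≠ α}

def restrColors (G : SimpleGraph V) (c : Sym2 V → ℕ) (v : V) (X : Set V) (y : V) : Set ℕ :=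
  {α | α ∈ sepColors G c v X y ∧ ∀ w, G.Adj w y → w ∉ X → c s(w, y) ≠ α}

section

variable {G : SimpleGraph V} {c : Sym2 V → ℕ}

theorem ncard_colorNbhd_le_repNum [Finite V] (x : V) (α : ℕ) :
    (colorNbhd G c x α).ncard ≤ repNum G c := by
  have hbdd : ∀ y β, (colorNbhd G c y β).ncard ≤ Nat.card V := fun _ _ => Set.ncard_le_card _
  calc (colorNbhd G c x α).ncard ≤ ⨆ β, (colorNbhd G c x β).ncard :=
        le_ciSup ⟨_, Set.forall_mem_range.2 (hbdd x)⟩ α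
    _ ≤ repNum G c :=
        le_ciSup (f := fun y => ⨆ β, (colorNbhd G c y β).ncard)
          ⟨_, Set.forall_mem_range.2 fun y => ciSup_le (hbdd y)⟩ x

theorem sepColors_finite [Finite V] (v : V) (X : Set V) (y : V) :
    (sepColors G c v X y).Finite := by
  refine (Set.finite_range fun x => c s(x, y)).subset ?_
  rintro _ ⟨x, -, -, rfl, -⟩
  exact ⟨x, rfl⟩

theorem restrCount_le_sepCount [Finite V] (v : V) (X : Set V) (y : V) :
    restrCount G c v X y ≤ sepCount G c v X y :=
  Set.ncard_le_ncard (s := restrColors G c v X y) (fun _ h => h.1) (sepColors_finite v X y)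

theorem exists_deleteEdges_adj_of_one_lt_ncard {w u : V}
    (h : 1 < (colorNbhd G c u (c s(w, u))).ncard) :
    ∃ w', (G.deleteEdges {s(w, u)}).Adj w' u ∧ c s(w', u) = c s(w, u) := by
  obtain ⟨w', ⟨hw'u, hc⟩, hw'w⟩ := Set.exists_ne_of_one_lt_ncard h w
  refine ⟨w', SimpleGraph.deleteEdges_adj.2 ⟨hw'u, ?_⟩, hc⟩
  rw [Set.mem_singleton_iff, Sym2.eq_iff]
  rintro (⟨h, -⟩ | ⟨h, -⟩)
  exacts [hw'w h, hw'u.ne h]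

theorem colorDeg_deleteEdges_singleton {e : Sym2 V}
    (he : ∀ u ∈ e, 1 < (colorNbhd G c u (c e)).ncard) (u : V) :
    colorDeg (G.deleteEdges {e}) c u = colorDeg G c u := by
  unfold colorDeg
  congr 1
  ext α
  constructor
  · rintro ⟨w, hw, rfl⟩
    exact ⟨w, SimpleGraph.deleteEdges_le _ hw, rfl⟩
  · rintro ⟨w, hw, rfl⟩
    by_cases hwu : s(w, u) = e
    · subst hwu
      exact exists_deleteEdges_adj_of_one_lt_ncard (he u (Sym2.mem_mk_right w u))
    · exact ⟨w, SimpleGraph.deleteEdges_adj.2 ⟨hw, hwu⟩, rfl⟩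

theorem EdgeMinimal.ncard_colorNbhd_eq_one [Finite V] (hmin : EdgeMinimal G c) {a b : V}
    (hab : G.Adj a b) (hb : (colorNbhd G c b (c s(a, b))).ncard ≠ 1) :
    (colorNbhd G c a (c s(a, b))).ncard = 1 := by
  by_contra ha
  have hpos_a : 0 < (colorNbhd G c a (c s(a, b))).ncard :=
    (Set.ncard_pos (Set.toFinite _)).2 ⟨b, hab.symm, by rw [Sym2.eq_swap]⟩
  have hpos_b : 0 < (colorNbhd G c b (c s(a, b))).ncard :=
    (Set.ncard_pos (Set.toFinite _)).2 ⟨a, hab, rfl⟩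
  have he : ∀ u ∈ s(a, b), 1 < (colorNbhd G c u (c s(a, b))).ncard := by
    intro u hu
    rcases Sym2.mem_iff.1 hu with rfl | rfl <;> omega
  refine hmin (G.deleteEdges {s(a, b)}) (SimpleGraph.deleteEdges_le _) (fun hG => ?_) ?_
  · have := hab
    rw [← hG, SimpleGraph.deleteEdges_adj] at this
    exact this.2 rfl
  · simp only [minColorDeg, colorDeg_deleteEdges_singleton he]

theorem EdgeMinimal.colorNbhd_eq_singleton [Finite V] (hmin : EdgeMinimal G c) {v x : V}
    (hvx : G.Adj v x) (hx : x ∉ bangNbhd G c v) : colorNbhd G c x (c s(v, x)) = {v} := by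
  have hone := hmin.ncard_colorNbhd_eq_one hvx.symm fun h => hx ⟨hvx.symm, h⟩
  rw [Sym2.eq_swap] at hone
  obtain ⟨a, ha⟩ := Set.ncard_eq_one.1 hone
  have hv : v ∈ colorNbhd G c x (c s(v, x)) := ⟨hvx, rfl⟩
  rw [ha, Set.mem_singleton_iff] at hv
  rw [ha, hv]

open Classical in
theorem card_filter_mem_colorNbhd_add_one_le_repNum [Finite V] {v x : V} (hvx : G.Adj v x)
    {Y : Finset V} (hvY : v ∉ Y) :
    #{y ∈ Y | y ∈ colorNbhd G c x (c s(v, x))} + 1 ≤ repNum G c := by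
  have hsub : ↑{y ∈ Y | y ∈ colorNbhd G c x (c s(v, x))} ⊆
      colorNbhd G c x (c s(v, x)) \ {v} := by
    intro y hy
    rw [coe_filter] at hy
    exact ⟨hy.2, fun h => hvY (Set.mem_singleton_iff.1 h ▸ hy.1)⟩
  calc #{y ∈ Y | y ∈ colorNbhd G c x (c s(v, x))} + 1
      ≤ (colorNbhd G c x (c s(v, x)) \ {v}).ncard + 1 := by
        rw [← Set.ncard_coe_finset]
        exact Nat.add_le_add_right (Set.ncard_le_ncard hsub) 1
    _ = (colorNbhd G c x (c s(v, x))).ncard := Set.ncard_sdiff_singleton_add_one ⟨hvx, rfl⟩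
    _ ≤ repNum G c := ncard_colorNbhd_le_repNum x _

open Classical in
theorem sum_card_filter_mem_colorNbhd_le [Finite V] (hmin : EdgeMinimal G c) {v : V}
    {X Y : Finset V} (hX : ∀ x ∈ X, G.Adj v x) (hvY : v ∉ Y) :
    ∑ x ∈ X, (#{y ∈ Y | y ∈ colorNbhd G c x (c s(v, x))} : ℚ) ≤
      ((repNum G c : ℚ) - 1) * (↑X ∩ bangNbhd G c v).ncard := by
  calc ∑ x ∈ X, (#{y ∈ Y | y ∈ colorNbhd G c x (c s(v, x))} : ℚ)
      ≤ ∑ x ∈ X, if x ∈ bangNbhd G c v then (repNum G c : ℚ) - 1 else 0 := by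
        refine sum_le_sum fun x hx => ?_
        split_ifs with hbang
        · have := card_filter_mem_colorNbhd_add_one_le_repNum (c := c) (hX x hx) hvY
          rw [le_sub_iff_add_le]
          exact_mod_cast this
        · simp [hmin.colorNbhd_eq_singleton (hX x hx) hbang, hvY]
    _ = ((repNum G c : ℚ) - 1) * (↑X ∩ bangNbhd G c v).ncard := by
        rw [← sum_filter, sum_const, nsmul_eq_mul, mul_comm, ← Set.ncard_coe_finset, coe_filter]
        rfl

open Classical in
theorem colorDeg_add_card_le [Fintype V] (v : V) (X : Finset V) (y : V) :
    colorDeg G c y + #X ≤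
      Fintype.card V + restrCount G c v X y + #{x ∈ X | y ∈ colorNbhd G c x (c s(v, x))} := by
  set B := {x ∈ X | y ∈ colorNbhd G c x (c s(v, x))}
  have hcover : {α | ∃ u, G.Adj u y ∧ c s(u, y) = α} ⊆
      (fun w => c s(w, y)) '' (↑X)ᶜ ∪ restrColors G c v X y ∪
        (fun x => c s(x, y)) '' ↑B := by
    rintro _ ⟨u, hu, rfl⟩
    by_cases hout : ∃ w ∉ (X : Set V), G.Adj w y ∧ c s(w, y) = c s(u, y)
    · obtain ⟨w, hwX, -, hw⟩ := hout
      exact Or.inl (Or.inl ⟨w, hwX, hw⟩)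
    push Not at hout
    have huX : u ∈ X := by_contra fun h => hout u h hu rfl
    by_cases hsep : c s(u, y) ∈ sepColors G c v X y
    · exact Or.inl (Or.inr ⟨hsep, fun w hw hwX => hout w hwX hw⟩)
    · refine Or.inr ⟨u, ?_, rfl⟩
      have hvu : c s(v, u) = c s(u, y) := by_contra fun h => hsep ⟨u, huX, hu, rfl, h⟩
      rw [coe_filter]
      exact ⟨huX, hu.symm, by rw [Sym2.eq_swap, hvu]⟩
  have hcompl : ((↑X : Set V)ᶜ).ncard + #X = Fintype.card V := by
    rw [← Set.ncard_coe_finset, add_comm, Set.ncard_add_ncard_compl, Nat.card_eq_fintype_card]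
  calc colorDeg G c y + #X
      ≤ ((fun w => c s(w, y)) '' (↑X)ᶜ).ncard + (restrColors G c v X y).ncard
          + ((fun x => c s(x, y)) '' ↑B).ncard + #X := by
        refine Nat.add_le_add_right ((Set.ncard_le_ncard hcover ?_).trans ?_) _
        · exact ((Set.toFinite _).union
            ((sepColors_finite v _ y).subset fun _ h => h.1)).union (Set.toFinite _)
        · exact (Set.ncard_union_le _ _).trans (Nat.add_le_add_right (Set.ncard_union_le _ _) _)
    _ ≤ ((↑X : Set V)ᶜ).ncard + restrCount G c v X y + #B + #X := by
        gcongr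
        · exact Set.ncard_image_le (Set.toFinite _)
        · rfl
        · exact (Set.ncard_image_le (Set.toFinite _)).trans (Set.ncard_coe_finset B).le
    _ = Fintype.card V + restrCount G c v X y + #B := by omega

theorem card_mul_le_sum_restrCount [Fintype V] (hmin : EdgeMinimal G c) {v : V}
    {X Y : Finset V} (hX : ∀ x ∈ X, G.Adj v x) (hvY : v ∉ Y) :
    ((minColorDeg G c : ℚ) + #X) * #Y ≤
      (Fintype.card V : ℚ) * #Y + ∑ y ∈ Y, (restrCount G c v X y : ℚ) +
        ((repNum G c : ℚ) - 1) * (↑X ∩ bangNbhd G c v).ncard := by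
  classical
  let bad (x : V) : Set V := colorNbhd G c x (c s(v, x))
  have hy (y : V) : (minColorDeg G c : ℚ) + #X ≤
      Fintype.card V + restrCount G c v X y + #{x ∈ X | y ∈ bad x} := by
    exact_mod_cast (Nat.add_le_add_right (ciInf_le (OrderBot.bddBelow _) y) _).trans
      (colorDeg_add_card_le v X y)
  have hswap : ∑ y ∈ Y, #{x ∈ X | y ∈ bad x} = ∑ x ∈ X, #{y ∈ Y | y ∈ bad x} :=
    sum_card_bipartiteAbove_eq_sum_card_bipartiteBelow (fun y x => y ∈ bad x)
  calc ((minColorDeg G c : ℚ) + #X) * #Y = ∑ y ∈ Y, ((minColorDeg G c : ℚ) + #X) := by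
        rw [sum_const, nsmul_eq_mul, mul_comm]
    _ ≤ ∑ y ∈ Y, ((Fintype.card V : ℚ) + restrCount G c v X y + #{x ∈ X | y ∈ bad x}) :=
        sum_le_sum fun y _ => hy y
    _ = (Fintype.card V : ℚ) * #Y + ∑ y ∈ Y, (restrCount G c v X y : ℚ) +
          ∑ x ∈ X, (#{y ∈ Y | y ∈ bad x} : ℚ) := by
        rw [sum_add_distrib, sum_add_distrib, sum_const, nsmul_eq_mul, mul_comm]
        exact_mod_cast congrArg (_ + ·) hswap
    _ ≤ _ := by
        gcongr
        exact sum_card_filter_mem_colorNbhd_le hmin hX hvY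

end

theorem stmt4 [Fintype V] (G : SimpleGraph V) (c : Sym2 V → ℕ)
    (hmin : EdgeMinimal G c) (v : V) (X Y : Finset V)
    (hX : ∀ x ∈ X, G.Adj v x) (hY : Y.Nonempty) (hvY : v ∉ Y) :
    (∑ y ∈ Y, (restrCount G c v ↑X y : ℚ)) / Y.card ≥
        (minColorDeg G c : ℚ) + X.card - Fintype.card V -
          ((repNum G c : ℚ) - 1) * (Set.ncard (↑X ∩ bangNbhd G c v) : ℚ) / Y.card ∧
    (∑ y ∈ Y, (sepCount G c v ↑X y : ℚ)) / Y.card ≥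
        (minColorDeg G c : ℚ) + X.card - Fintype.card V -
          ((repNum G c : ℚ) - 1) * (Set.ncard (↑X ∩ bangNbhd G c v) : ℚ) / Y.card := by
  have hYpos : (0 : ℚ) < #Y := by exact_mod_cast hY.card_pos
  have hrestr : (∑ y ∈ Y, (restrCount G c v ↑X y : ℚ)) / #Y ≥
      (minColorDeg G c : ℚ) + #X - Fintype.card V -
        ((repNum G c : ℚ) - 1) * (↑X ∩ bangNbhd G c v).ncard / #Y := by
    have := card_mul_le_sum_restrCount hmin hX hvY
    rw [ge_iff_le, le_div_iff₀ hYpos, sub_mul, div_mul_cancel₀ _ hYpos.ne']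
    linarith
  refine ⟨hrestr, hrestr.trans ?_⟩
  gcongr with y
  exact_mod_cast restrCount_le_sepCount v _ y
end

section
/- Fix an integer ℓ ≥ 3 and let (G,c) be an edge-minimal edge-colored graph with no rainbow ℓ-cycle. Fix a vertex v and X ⊆ N(v), let C_rep be the set of colors c({v,x}) that appear on at least two edges {v,x} with x ∈ X, and let y be a vertex admitting an (ℓ−1)-vertex rainbow path from v to y in G whose edges avoid all colors in C_rep. Then the number of colors that X-separate y from v is at most 3ℓ. -/
open Finset

variable {V : Type*}

theorem sepCount_eq_ncard_sepColors (G : SimpleGraph V) (c : Sym2 V → ℕ) (v : V) (X : Set V)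
    (y : V) : sepCount G c v X y = (sepColors G c v X y).ncard :=
  rfl

theorem sepColors_self (G : SimpleGraph V) (c : Sym2 V → ℕ) (v : V) (X : Set V) :
    sepColors G c v X v = ∅ := by
  refine Set.eq_empty_of_forall_notMem fun α ⟨x, _, _, hxv, hvx⟩ => hvx ?_
  rw [← hxv, Sym2.eq_swap]

theorem Set.injOn_of_ncard_fiber_le_one {α β : Type*} [Finite α] {f : α → β} {s : Set α}
    {t : Set β} (h : ∀ b ∈ t, {a ∈ s | f a = b}.ncard ≤ 1) : Set.InjOn f {a ∈ s | f a ∈ t} :=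
  fun _ h₁ _ h₂ heq =>
    (Set.ncard_le_one_iff (Set.toFinite _)).mp (h _ h₁.2) ⟨h₁.1, rfl⟩ ⟨h₂.1, heq.symm⟩

theorem Set.ncard_image_le_ncard_of_injOn {α β γ : Type*} {s : Set α} {t : Set β} (f : α → β)
    (g : α → γ) (hf : Set.InjOn f s) (hst : Set.MapsTo f s t) (ht : t.Finite) :
    (g '' s).ncard ≤ t.ncard :=
  have hs : s.Finite := Set.Finite.of_finite_image (ht.subset hst.image_subset) hf
  (Set.ncard_image_le hs).trans (Set.ncard_le_ncard_of_injOn f hst hf ht)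

namespace SimpleGraph.Walk

variable {G : SimpleGraph V} {v y x : V}

theorem IsPath.isCycle_cons_concat {p : G.Walk v y} (hp : p.IsPath) (hvy : v ≠ y)
    (hx : x ∉ p.support) (hyx : G.Adj y x) (hxv : G.Adj x v) :
    (cons hxv (p.concat hyx)).IsCycle := by
  refine (cons_isCycle_iff _ _).mpr ⟨?_, ?_⟩
  · rw [← isPath_reverse_iff, reverse_concat]
    exact hp.reverse.cons (by simpa using hx)
  · rw [edges_concat, List.concat_eq_append, List.mem_append, List.mem_singleton]
    rintro (h | h)
    · exact hx (p.fst_mem_support_of_mem_edges h)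
    · rcases Sym2.eq_iff.mp h with ⟨rfl, -⟩ | ⟨-, rfl⟩
      · exact hx p.end_mem_support
      · exact hvy rfl

theorem IsPath.hasRainbowCycle_cons_concat {c : Sym2 V → ℕ} {p : G.Walk v y} (hp : p.IsPath)
    (hrb : (p.edges.map c).Nodup) (hvy : v ≠ y) (hx : x ∉ p.support) (hyx : G.Adj y x)
    (hxv : G.Adj x v) (hxy : c s(x, y) ∉ p.edges.map c) (hvx : c s(v, x) ∉ p.edges.map c)
    (hne : c s(v, x) ≠ c s(x, y)) : HasRainbowCycle G c (p.length + 2) := by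
  refine ⟨x, cons hxv (p.concat hyx), hp.isCycle_cons_concat hvy hx hyx hxv, by simp, ?_⟩
  have hxv_swap : c s(x, v) = c s(v, x) := congrArg c Sym2.eq_swap
  have hyx_swap : c s(y, x) = c s(x, y) := congrArg c Sym2.eq_swap
  simp only [edges_cons, edges_concat, List.concat_eq_append, List.map_cons, List.map_append,
    List.map_nil, List.nodup_cons, List.mem_append, List.mem_singleton, List.nodup_append,
    hxv_swap, hyx_swap]
  refine ⟨not_or.mpr ⟨hvx, hne⟩, hrb, by simp, ?_⟩
  rintro _ ha _ rfl rfl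
  exact hxy ha

end SimpleGraph.Walk

theorem sepColors_subset_of_not_hasRainbowCycle {G : SimpleGraph V} {c : Sym2 V → ℕ}
    {v y : V} {X : Set V} (hX : X ⊆ G.neighborSet v) {p : G.Walk v y} (hp : p.IsPath)
    (hrb : (p.edges.map c).Nodup) (hvy : v ≠ y) (hno : ¬ HasRainbowCycle G c (p.length + 2)) :
    sepColors G c v X y ⊆
      ↑(p.edges.map c).toFinset ∪ ↑(p.support.map fun z => c s(z, y)).toFinset
      ∪ (fun x => c s(x, y)) '' {x ∈ X | c s(v, x) ∈ (p.edges.map c).toFinset} := by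
  rintro α ⟨x, hxX, hxy, rfl, hne⟩
  by_cases hα : c s(x, y) ∈ p.edges.map c
  · exact Or.inl (Or.inl (List.mem_toFinset.mpr hα))
  by_cases hx : x ∈ p.support
  · exact Or.inl (Or.inr (List.mem_toFinset.mpr (List.mem_map_of_mem hx)))
  by_cases hvx : c s(v, x) ∈ p.edges.map c
  · exact Or.inr ⟨x, ⟨hxX, List.mem_toFinset.mpr hvx⟩, rfl⟩
  exact absurd (hp.hasRainbowCycle_cons_concat hrb hvy hx hxy.symm (hX hxX).symm hα hvx hne) hno

theorem stmt5_general (ℓ : ℕ) [Fintype V] (G : SimpleGraph V) (c : Sym2 V → ℕ)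
    (hno : ¬ HasRainbowCycle G c ℓ)
    (v y : V) (X : Set V) (hX : X ⊆ G.neighborSet v)
    (hpath : RainbowPathAvoiding G c v y (ℓ - 1)
      {α : ℕ | 1 < Set.ncard {x ∈ X | c s(v, x) = α}}) :
    sepCount G c v X y ≤ 3 * ℓ := by
  obtain ⟨p, hp, hlen, hrb, havoid⟩ := hpath
  obtain rfl : ℓ = p.length + 2 := by omega
  rcases eq_or_ne v y with rfl | hvy
  · simp [sepCount_eq_ncard_sepColors, sepColors_self]
  set A := (p.edges.map c).toFinset
  set B := (p.support.map fun z => c s(z, y)).toFinset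
  set D := (fun x => c s(x, y)) '' {x ∈ X | c s(v, x) ∈ A}
  have hA : A.card ≤ p.length := by
    simpa using (p.edges.map c).toFinset_card_le
  have hB : B.card ≤ p.length + 1 := by
    simpa using (p.support.map fun z => c s(z, y)).toFinset_card_le
  have hD : D.ncard ≤ A.card := by
    rw [← Set.ncard_coe_finset]
    refine Set.ncard_image_le_ncard_of_injOn _ _ (Set.injOn_of_ncard_fiber_le_one ?_)
      (fun _ hx => hx.2) A.finite_toSet
    intro b hb
    obtain ⟨e, he, rfl⟩ := List.mem_map.mp (List.mem_toFinset.mp hb)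
    simpa using havoid e he
  calc sepCount G c v X y ≤ (↑A ∪ ↑B ∪ D).ncard :=
        Set.ncard_le_ncard (sepColors_subset_of_not_hasRainbowCycle hX hp hrb hvy hno)
    _ ≤ A.card + B.card + D.ncard := by
        grw [Set.ncard_union_le, Set.ncard_union_le, Set.ncard_coe_finset, Set.ncard_coe_finset]
    _ ≤ 3 * (p.length + 2) := by omega

theorem stmt5 (ℓ : ℕ) (hl : 3 ≤ ℓ) [Fintype V] (G : SimpleGraph V) (c : Sym2 V → ℕ)
    (hmin : EdgeMinimal G c) (hno : ¬ HasRainbowCycle G c ℓ)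
    (v y : V) (X : Set V) (hX : X ⊆ G.neighborSet v)
    (hpath : RainbowPathAvoiding G c v y (ℓ - 1)
      {α : ℕ | 1 < Set.ncard {x ∈ X | c s(v, x) = α}}) :
    sepCount G c v X y ≤ 3 * ℓ :=
  stmt5_general ℓ G c hno v y X hX hpath
end

section
/- Fix ℓ ≥ 3 and let (G,c) be an n-vertex edge-minimal edge-colored graph with no rainbow ℓ-cycle, replication number R, and δ^c(G) ≥ 5R + 27ℓ. Then δ^c(G) < n/2 or the maximum degree Δ(G) < δ^c(G) + 4R + 3ℓ. -/
open Finset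

variable {V : Type*}

section Aux2
set_option linter.unusedSectionVars false
variable [Fintype V] (G : SimpleGraph V) [DecidableRel G.Adj] (c : Sym2 V → ℕ)
open scoped Classical

noncomputable def CSx (v : V) : Finset ℕ :=
  (G.neighborFinset v).image (fun u => c s(u, v))

noncomputable def CLx (v : V) (γ : ℕ) : Finset V :=
  (G.neighborFinset v).filter (fun u => c s(u, v) = γ)

variable {G c}

lemma colorDeg_eq_card (v : V) : colorDeg G c v = (CSx G c v).card := by
  rw [colorDeg]
  have : {α : ℕ | ∃ u, G.Adj u v ∧ c s(u, v) = α} = ↑(CSx G c v) := by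
    ext α
    simp [CSx, SimpleGraph.mem_neighborFinset, SimpleGraph.adj_comm]
  rw [this, Set.ncard_coe_finset]

lemma minColorDeg_le (v : V) : minColorDeg G c ≤ colorDeg G c v :=
  ciInf_le (OrderBot.bddBelow _) v

lemma mem_CLx {v u : V} {γ : ℕ} : u ∈ CLx G c v γ ↔ G.Adj u v ∧ c s(u, v) = γ := by
  simp [CLx, SimpleGraph.mem_neighborFinset, SimpleGraph.adj_comm]

lemma mem_CSx {v : V} {γ : ℕ} : γ ∈ CSx G c v ↔ ∃ u, G.Adj u v ∧ c s(u, v) = γ := by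
  simp [CSx, SimpleGraph.mem_neighborFinset, SimpleGraph.adj_comm]

lemma CLx_card_le_repNum (v : V) (γ : ℕ) : (CLx G c v γ).card ≤ repNum G c := by
  have h1 : (CLx G c v γ).card = Set.ncard {u : V | G.Adj u v ∧ c s(u, v) = γ} := by
    have : {u : V | G.Adj u v ∧ c s(u, v) = γ} = ↑(CLx G c v γ) := by
      ext u; simp [mem_CLx]
    rw [this, Set.ncard_coe_finset]
  have hbdd : ∀ (w : V) (α : ℕ), Set.ncard {u : V | G.Adj u w ∧ c s(u, w) = α} ≤ Fintype.card V := by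
    intro w α
    have h := Set.ncard_le_ncard (Set.subset_univ {u : V | G.Adj u w ∧ c s(u, w) = α}) Set.finite_univ
    simpa [Set.ncard_univ] using h
  have h2 : Set.ncard {u : V | G.Adj u v ∧ c s(u, v) = γ} ≤ ⨆ α : ℕ, Set.ncard {u : V | G.Adj u v ∧ c s(u, v) = α} := by
    apply le_ciSup ⟨Fintype.card V, ?_⟩ γ
    rintro x ⟨α, rfl⟩; exact hbdd v α
  have h3 : (⨆ α : ℕ, Set.ncard {u : V | G.Adj u v ∧ c s(u, v) = α}) ≤ repNum G c := by
    apply le_ciSup ⟨Fintype.card V, ?_⟩ v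
    rintro x ⟨w, rfl⟩
    exact ciSup_le fun α => hbdd w α
  omega

lemma CSx_card_le_degree (v : V) : (CSx G c v).card ≤ G.degree v := by
  rw [SimpleGraph.degree]; exact Finset.card_image_le

lemma sum_CLx (v : V) : ∑ γ ∈ CSx G c v, (CLx G c v γ).card = G.degree v := by
  rw [SimpleGraph.degree, CSx]
  exact (Finset.card_eq_sum_card_image (fun u => c s(u, v)) (G.neighborFinset v)).symm

lemma CLx_nonempty {v : V} {γ : ℕ} (h : γ ∈ CSx G c v) : 1 ≤ (CLx G c v γ).card := by
  rw [mem_CSx] at h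
  obtain ⟨u, hu, hc⟩ := h
  exact Finset.card_pos.2 ⟨u, mem_CLx.2 ⟨hu, hc⟩⟩

/-- number of classes of size ≥ s+1 times s is at most degree minus number of colors -/
lemma big_classes_bound (v : V) (s : ℕ) :
    ((CSx G c v).filter (fun γ => s + 1 ≤ (CLx G c v γ).card)).card * s + (CSx G c v).card
      ≤ G.degree v := by
  classical
  have h1 : ∑ γ ∈ CSx G c v, (CLx G c v γ).card = G.degree v := sum_CLx v
  have hsplit := Finset.sum_filter_add_sum_filter_not (CSx G c v)
    (fun γ => s + 1 ≤ (CLx G c v γ).card) (fun γ => (CLx G c v γ).card)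
  have h2 : ((CSx G c v).filter (fun γ => s + 1 ≤ (CLx G c v γ).card)).card * (s + 1)
      ≤ ∑ γ ∈ (CSx G c v).filter (fun γ => s + 1 ≤ (CLx G c v γ).card), (CLx G c v γ).card := by
    calc ((CSx G c v).filter (fun γ => s + 1 ≤ (CLx G c v γ).card)).card * (s + 1)
        = ∑ _γ ∈ (CSx G c v).filter (fun γ => s + 1 ≤ (CLx G c v γ).card), (s + 1) := by
          rw [Finset.sum_const, smul_eq_mul]
      _ ≤ _ := Finset.sum_le_sum (fun γ hγ => (Finset.mem_filter.1 hγ).2)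
  have h3 : ((CSx G c v).filter (fun γ => ¬ (s + 1 ≤ (CLx G c v γ).card))).card
      ≤ ∑ γ ∈ (CSx G c v).filter (fun γ => ¬ (s + 1 ≤ (CLx G c v γ).card)), (CLx G c v γ).card := by
    calc ((CSx G c v).filter (fun γ => ¬ (s + 1 ≤ (CLx G c v γ).card))).card
        = ∑ _γ ∈ (CSx G c v).filter (fun γ => ¬ (s + 1 ≤ (CLx G c v γ).card)), 1 := by
          rw [Finset.sum_const, smul_eq_mul, mul_one]
      _ ≤ _ := Finset.sum_le_sum (fun γ hγ => CLx_nonempty (Finset.mem_filter.1 hγ).1)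
  have h4 := Finset.card_filter_add_card_filter_not
    (s := CSx G c v) (p := fun γ => s + 1 ≤ (CLx G c v γ).card)
  have hmul : ((CSx G c v).filter (fun γ => s + 1 ≤ (CLx G c v γ).card)).card * (s + 1)
      = ((CSx G c v).filter (fun γ => s + 1 ≤ (CLx G c v γ).card)).card * s
        + ((CSx G c v).filter (fun γ => s + 1 ≤ (CLx G c v γ).card)).card := by ring
  omega


variable (G c) in
/-- vertices whose color at `v` is unique at `v` -/
noncomputable def Singx (v : V) : Finset V :=
  (G.neighborFinset v).filter (fun u => (CLx G c v (c s(u, v))).card = 1)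

lemma mem_Singx {v u : V} : u ∈ Singx G c v ↔ G.Adj u v ∧ (CLx G c v (c s(u, v))).card = 1 := by
  simp [Singx, SimpleGraph.mem_neighborFinset, SimpleGraph.adj_comm]

lemma Singx_class_eq {v u : V} (h : u ∈ Singx G c v) : CLx G c v (c s(u, v)) = {u} := by
  rw [mem_Singx] at h
  obtain ⟨h1, h2⟩ := h
  obtain ⟨a, ha⟩ := Finset.card_eq_one.1 h2
  have hu : u ∈ CLx G c v (c s(u, v)) := mem_CLx.2 ⟨h1, rfl⟩
  rw [ha] at hu ⊢
  rw [Finset.mem_singleton] at hu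
  rw [hu]

/-- `2q ≤ d + |Sing|` -/
lemma Singx_card_bound (v : V) :
    2 * (CSx G c v).card ≤ G.degree v + (Singx G c v).card := by
  classical
  have h1 : ∑ γ ∈ CSx G c v, (CLx G c v γ).card = G.degree v := sum_CLx v
  -- singleton colors
  have hsplit := Finset.sum_filter_add_sum_filter_not (CSx G c v)
    (fun γ => (CLx G c v γ).card = 1) (fun γ => (CLx G c v γ).card)
  have h2 : ((CSx G c v).filter (fun γ => ¬ ((CLx G c v γ).card = 1))).card * 2
      ≤ ∑ γ ∈ (CSx G c v).filter (fun γ => ¬ ((CLx G c v γ).card = 1)), (CLx G c v γ).card := by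
    calc ((CSx G c v).filter (fun γ => ¬ ((CLx G c v γ).card = 1))).card * 2
        = ∑ _γ ∈ (CSx G c v).filter (fun γ => ¬ ((CLx G c v γ).card = 1)), 2 := by
          rw [Finset.sum_const, smul_eq_mul, mul_comm]
      _ ≤ _ := by
          apply Finset.sum_le_sum
          intro γ hγ
          have := CLx_nonempty (Finset.mem_filter.1 hγ).1
          have h3 := (Finset.mem_filter.1 hγ).2
          omega
  have h3 : ∑ γ ∈ (CSx G c v).filter (fun γ => (CLx G c v γ).card = 1), (CLx G c v γ).card
      = ((CSx G c v).filter (fun γ => (CLx G c v γ).card = 1)).card := by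
    rw [Finset.sum_congr rfl (fun γ hγ => (Finset.mem_filter.1 hγ).2), Finset.sum_const,
      smul_eq_mul, mul_one]
  -- singleton colors ≤ |Sing|
  have h5 : ((CSx G c v).filter (fun γ => (CLx G c v γ).card = 1)).card ≤ (Singx G c v).card := by
    apply Finset.card_le_card_of_surjOn (fun u => c s(u, v))
    intro γ hγ
    obtain ⟨hγ1, hγ2⟩ := Finset.mem_filter.1 hγ
    obtain ⟨u, hu, hcu⟩ := mem_CSx.1 hγ1
    refine ⟨u, ?_, hcu⟩
    rw [Finset.mem_coe, mem_Singx]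
    rw [hcu]
    exact ⟨hu, hγ2⟩
  have h4 := Finset.card_filter_add_card_filter_not
    (s := CSx G c v) (p := fun γ => (CLx G c v γ).card = 1)
  omega


lemma Singx_card_le_CSx (v : V) : (Singx G c v).card ≤ (CSx G c v).card := by
  apply Finset.card_le_card_of_injOn (fun u => c s(u, v))
  · intro u hu
    rw [Finset.mem_coe, mem_Singx] at hu
    exact mem_CSx.2 ⟨u, hu.1, rfl⟩
  · intro u hu u' hu' he
    have h1 := Singx_class_eq (Finset.mem_coe.1 hu)
    have h2 := Singx_class_eq (Finset.mem_coe.1 hu')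
    simp only at he
    rw [he] at h1
    rw [h1] at h2
    exact Finset.singleton_injective h2

/-- The selection engine: if bad colors and bad vertices together number less
than the colors realized on `W`, we find a good vertex in `W`. -/
lemma engine {w : V} (W : Finset V) (Q : Finset ℕ) (P : Finset V) (X : ℕ)
    (hX : X ≤ (W.image fun z => c s(z, w)).card) (hcard : Q.card + P.card < X) :
    ∃ z ∈ W, z ∉ P ∧ c s(z, w) ∉ Q := by
  classical
  have hsub : W.image (fun z => c s(z, w)) ⊆
      (W \ P).image (fun z => c s(z, w)) ∪ (W ∩ P).image (fun z => c s(z, w)) := by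
    intro β hβ
    obtain ⟨z, hz, rfl⟩ := Finset.mem_image.1 hβ
    by_cases hzP : z ∈ P
    · exact Finset.mem_union_right _ (Finset.mem_image.2 ⟨z, Finset.mem_inter.2 ⟨hz, hzP⟩, rfl⟩)
    · exact Finset.mem_union_left _ (Finset.mem_image.2 ⟨z, Finset.mem_sdiff.2 ⟨hz, hzP⟩, rfl⟩)
  have h1 : X ≤ ((W \ P).image (fun z => c s(z, w))).card + P.card := by
    calc X ≤ (W.image fun z => c s(z, w)).card := hX
      _ ≤ (((W \ P).image (fun z => c s(z, w))) ∪ ((W ∩ P).image (fun z => c s(z, w)))).card :=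
          Finset.card_le_card hsub
      _ ≤ ((W \ P).image (fun z => c s(z, w))).card + ((W ∩ P).image (fun z => c s(z, w))).card :=
          Finset.card_union_le _ _
      _ ≤ ((W \ P).image (fun z => c s(z, w))).card + P.card := by
          gcongr
          exact (Finset.card_image_le).trans (Finset.card_le_card (Finset.inter_subset_right))
  have h2 : Q.card < ((W \ P).image (fun z => c s(z, w))).card := by omega
  have h3 : ¬ ((W \ P).image (fun z => c s(z, w)) ⊆ Q) := fun hs => absurd (Finset.card_le_card hs) (by omega)
  obtain ⟨β, hβmem, hβQ⟩ := Finset.not_subset.1 h3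
  obtain ⟨z, hz, rfl⟩ := Finset.mem_image.1 hβmem
  obtain ⟨hzW, hzP⟩ := Finset.mem_sdiff.1 hz
  exact ⟨z, hzW, hzP, hβQ⟩


/-- pool bound: every vertex has many colors into `N(v)` -/
lemma pool_bound (v w : V) :
    (CSx G c w).card + G.degree v ≤
      (((G.neighborFinset w ∩ G.neighborFinset v)).image fun z => c s(z, w)).card
        + Fintype.card V := by
  classical
  have hsub : CSx G c w ⊆
      ((G.neighborFinset w ∩ G.neighborFinset v).image fun z => c s(z, w)) ∪
      ((G.neighborFinset w \ G.neighborFinset v).image fun z => c s(z, w)) := by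
    intro β hβ
    rw [CSx, Finset.mem_image] at hβ
    obtain ⟨z, hz, rfl⟩ := hβ
    by_cases hzv : z ∈ G.neighborFinset v
    · exact Finset.mem_union_left _ (Finset.mem_image.2 ⟨z, Finset.mem_inter.2 ⟨hz, hzv⟩, rfl⟩)
    · exact Finset.mem_union_right _ (Finset.mem_image.2 ⟨z, Finset.mem_sdiff.2 ⟨hz, hzv⟩, rfl⟩)
  have h2 : (G.neighborFinset w \ G.neighborFinset v).card + G.degree v ≤ Fintype.card V := by
    have : G.neighborFinset w \ G.neighborFinset v ⊆ univ \ G.neighborFinset v :=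
      Finset.sdiff_subset_sdiff (Finset.subset_univ _) le_rfl
    have h3 := Finset.card_le_card this
    rw [Finset.card_sdiff_of_subset (Finset.subset_univ _), Finset.card_univ] at h3
    have h4 : (G.neighborFinset v).card ≤ Fintype.card V :=
      (Finset.card_le_card (Finset.subset_univ _)).trans_eq Finset.card_univ
    rw [SimpleGraph.degree]
    omega
  have h1 : (CSx G c w).card ≤
      (((G.neighborFinset w ∩ G.neighborFinset v)).image fun z => c s(z, w)).card +
      (G.neighborFinset w \ G.neighborFinset v).card :=
    (Finset.card_le_card hsub).trans ((Finset.card_union_le _ _).trans (by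
      gcongr; exact Finset.card_image_le))
  omega

variable (G c) in
/-- `Z₀`: neighbors of `v` whose `v`-edge color is not unique at their end -/
noncomputable def Zx (v : V) : Finset V :=
  (G.neighborFinset v).filter (fun z => (CLx G c z (c s(v, z))).card ≠ 1)

lemma mem_Zx {v z : V} : z ∈ Zx G c v ↔ G.Adj v z ∧ (CLx G c z (c s(v, z))).card ≠ 1 := by
  simp [Zx, SimpleGraph.mem_neighborFinset]

variable (G c) in
/-- conflict set: members of `Z₀` adjacent to `w` with matching colors -/
noncomputable def TZx (v w : V) : Finset V :=
  (Zx G c v).filter (fun z => G.Adj w z ∧ c s(w, z) = c s(v, z))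

/-- double counting: total conflict incidences are at most `|Z₀| * R` -/
lemma TZx_total (v : V) :
    ∑ w : V, (TZx G c v w).card ≤ (Zx G c v).card * repNum G c := by
  classical
  have h1 : ∀ w : V, (TZx G c v w).card =
      ∑ z ∈ Zx G c v, (if G.Adj w z ∧ c s(w, z) = c s(v, z) then 1 else 0) := by
    intro w
    rw [TZx, ← Finset.sum_filter]
    simp
  calc ∑ w : V, (TZx G c v w).card
      = ∑ w : V, ∑ z ∈ Zx G c v, (if G.Adj w z ∧ c s(w, z) = c s(v, z) then 1 else 0) := by
        exact Finset.sum_congr rfl (fun w _ => h1 w)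
    _ = ∑ z ∈ Zx G c v, ∑ w : V, (if G.Adj w z ∧ c s(w, z) = c s(v, z) then 1 else 0) :=
        Finset.sum_comm
    _ ≤ ∑ _z ∈ Zx G c v, repNum G c := by
        apply Finset.sum_le_sum
        intro z _
        have : ∑ w : V, (if G.Adj w z ∧ c s(w, z) = c s(v, z) then 1 else 0)
            = (univ.filter (fun w => G.Adj w z ∧ c s(w, z) = c s(v, z))).card := by
          rw [← Finset.sum_filter]
          simp
        rw [this]
        have hsub : univ.filter (fun w => G.Adj w z ∧ c s(w, z) = c s(v, z))
            ⊆ CLx G c z (c s(v, z)) := by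
          intro w hw
          obtain ⟨_, hw1, hw2⟩ := Finset.mem_filter.1 hw
          · exact mem_CLx.2 ⟨hw1, hw2⟩
        exact (Finset.card_le_card hsub).trans (CLx_card_le_repNum z _)
    _ = (Zx G c v).card * repNum G c := by rw [Finset.sum_const, smul_eq_mul]


lemma colorSet_finite (G' : SimpleGraph V) (u : V) :
    {α : ℕ | ∃ w, G'.Adj w u ∧ c s(w, u) = α}.Finite := by
  have : {α : ℕ | ∃ w, G'.Adj w u ∧ c s(w, u) = α} = (fun w => c s(w, u)) '' {w | G'.Adj w u} := by
    ext α; simp [Set.mem_image]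
  rw [this]
  exact Set.Finite.image _ (Set.toFinite _)

lemma colorDeg_mono {G' H : SimpleGraph V} (hle : H ≤ G') (u : V) :
    colorDeg H c u ≤ colorDeg G' c u := by
  apply Set.ncard_le_ncard _ (colorSet_finite G' u)
  rintro α ⟨w, hw, rfl⟩
  exact ⟨w, hle hw, rfl⟩

/-- Edge-minimality dichotomy: every edge has an endpoint of minimum color degree
at which its color is unique. -/
lemma dichotomy [Nonempty V] (hmin : EdgeMinimal G c) {x y : V} (hxy : G.Adj x y) :
    (colorDeg G c x = minColorDeg G c ∧ (CLx G c x (c s(x, y))).card = 1) ∨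
    (colorDeg G c y = minColorDeg G c ∧ (CLx G c y (c s(x, y))).card = 1) := by
  set H := G.deleteEdges {s(x, y)} with hH
  have hHadj : ∀ a b : V, H.Adj a b ↔ G.Adj a b ∧ s(a, b) ≠ s(x, y) := by
    intro a b
    rw [hH, SimpleGraph.deleteEdges_adj]
    simp
  have hle : H ≤ G := SimpleGraph.deleteEdges_le _
  have hne : H ≠ G := by
    intro h
    have := ((hHadj x y).1 (h ▸ hxy)).2
    exact this rfl
  have hlt : minColorDeg H c < minColorDeg G c := by
    have h1 := hmin H hle hne
    have h2 : minColorDeg H c ≤ minColorDeg G c := by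
      apply le_ciInf
      intro u
      exact (minColorDeg_le u).trans (colorDeg_mono (c := c) hle u)
    omega
  obtain ⟨w, hw⟩ : ∃ w, colorDeg H c w = minColorDeg H c := by
    have h := Nat.sInf_mem (s := Set.range (fun u => colorDeg H c u)) (Set.range_nonempty _)
    obtain ⟨w, hw⟩ := h
    exact ⟨w, hw⟩
  have hwlt : colorDeg H c w < minColorDeg G c := hw ▸ hlt
  have hwge : minColorDeg G c ≤ colorDeg G c w := minColorDeg_le w
  -- find a color present at w in G but not in H
  have hsubHG : {α : ℕ | ∃ u, H.Adj u w ∧ c s(u, w) = α} ⊆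
      {α : ℕ | ∃ u, G.Adj u w ∧ c s(u, w) = α} := by
    rintro α ⟨u, hu, rfl⟩; exact ⟨u, hle hu, rfl⟩
  obtain ⟨α, hαG, hαH⟩ : ∃ α, α ∈ {α : ℕ | ∃ u, G.Adj u w ∧ c s(u, w) = α} ∧
      α ∉ {α : ℕ | ∃ u, H.Adj u w ∧ c s(u, w) = α} := by
    by_contra hcon
    push_neg at hcon
    have : {α : ℕ | ∃ u, G.Adj u w ∧ c s(u, w) = α} = {α : ℕ | ∃ u, H.Adj u w ∧ c s(u, w) = α} :=
      Set.Subset.antisymm hcon hsubHG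
    have : colorDeg G c w = colorDeg H c w := by rw [colorDeg, colorDeg, this]
    omega
  obtain ⟨u, huw, hcu⟩ := hαG
  have hkey : ∀ u' : V, G.Adj u' w → c s(u', w) = α → s(u', w) = s(x, y) := by
    intro u' h1 h2
    by_contra h3
    exact hαH ⟨u', (hHadj u' w).2 ⟨h1, h3⟩, h2⟩
  have huxy : s(u, w) = s(x, y) := hkey u huw hcu
  have main : colorDeg G c w = minColorDeg G c ∧ (CLx G c w (c s(u, w))).card = 1 := by
    constructor
    · have hsub2 : {β : ℕ | ∃ u', G.Adj u' w ∧ c s(u', w) = β} ⊆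
          {β : ℕ | ∃ u', H.Adj u' w ∧ c s(u', w) = β} ∪ {α} := by
        rintro β ⟨u', hu', rfl⟩
        by_cases hs : s(u', w) = s(x, y)
        · right
          rw [Set.mem_singleton_iff, hs, ← huxy, hcu]
        · left; exact ⟨u', (hHadj u' w).2 ⟨hu', hs⟩, rfl⟩
      have h5 : colorDeg G c w ≤ colorDeg H c w + 1 := by
        rw [colorDeg, colorDeg]
        calc {β : ℕ | ∃ u', G.Adj u' w ∧ c s(u', w) = β}.ncard
            ≤ ({β : ℕ | ∃ u', H.Adj u' w ∧ c s(u', w) = β} ∪ {α}).ncard :=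
              Set.ncard_le_ncard hsub2
                (Set.Finite.union (colorSet_finite H w) (Set.finite_singleton α))
          _ ≤ {β : ℕ | ∃ u', H.Adj u' w ∧ c s(u', w) = β}.ncard + ({α} : Set ℕ).ncard :=
              Set.ncard_union_le _ _
          _ = _ + 1 := by rw [Set.ncard_singleton]
      omega
    · have : CLx G c w (c s(u, w)) = {u} := by
        apply Finset.eq_singleton_iff_unique_mem.2
        refine ⟨mem_CLx.2 ⟨huw, rfl⟩, ?_⟩
        intro u'' hu''
        obtain ⟨h1, h2⟩ := mem_CLx.1 hu''
        have h3 : s(u'', w) = s(u, w) := by rw [hkey u'' h1 (by rw [h2, hcu]), ← huxy]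
        rw [Sym2.eq_iff] at h3
        rcases h3 with ⟨h5, _⟩ | ⟨h5, h6⟩
        · exact h5
        · exact absurd (h5 ▸ h1) (G.irrefl)
      rw [this, Finset.card_singleton]
  rw [Sym2.eq_iff] at huxy
  rcases huxy with ⟨hux, hwy⟩ | ⟨huy, hwx⟩
  · right
    subst hux; subst hwy
    exact main
  · left
    subst huy; subst hwx
    rw [Sym2.eq_swap]
    exact main


variable (G c) in
/-- vertices with many conflicts -/
noncomputable def Tbigx (v : V) (K : ℕ) : Finset V :=
  univ.filter (fun w => K < (TZx G c v w).card)

lemma Tbigx_card (v : V) (K : ℕ) :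
    (Tbigx G c v K).card * (K + 1) ≤ (Zx G c v).card * repNum G c := by
  classical
  calc (Tbigx G c v K).card * (K + 1) = (K + 1) * (Tbigx G c v K).card := mul_comm _ _
    _ ≤ ∑ w ∈ Tbigx G c v K, (TZx G c v w).card := by
        have h := Finset.card_nsmul_le_sum (Tbigx G c v K) (fun w => (TZx G c v w).card) (K + 1)
          (fun w hw => Nat.succ_le_of_lt (Finset.mem_filter.1 hw).2)
        rw [mul_comm]
        simpa [smul_eq_mul] using h
    _ ≤ ∑ w : V, (TZx G c v w).card :=
        Finset.sum_le_sum_of_subset (Finset.subset_univ _)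
    _ ≤ (Zx G c v).card * repNum G c := TZx_total v

lemma isPath_concat {u w z : V} {p : G.Walk u w} (hp : p.IsPath) (h : G.Adj w z)
    (hz : z ∉ p.support) : (p.concat h).IsPath := by
  rw [SimpleGraph.Walk.isPath_def, SimpleGraph.Walk.support_concat]
  simpa using List.Nodup.concat hz (SimpleGraph.Walk.isPath_def _ |>.1 hp)

/-- The greedy rainbow path construction. -/
lemma greedy (v u₁ : V) (s K ℓ δ : ℕ)
    (hδle : ∀ w : V, δ ≤ (CSx G c w).card)
    (hu₁ : G.Adj u₁ v)
    (hT₁ : (TZx G c v u₁).card ≤ K)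
    (hZδ : (Zx G c v).card ≤ δ)
    (hnum : ∀ Bg Tb : ℕ,
      Bg * s + δ ≤ G.degree v → Tb * (K + 1) ≤ δ * repNum G c →
      (ℓ - 3) + Bg + ((ℓ - 2) + Tb) + 1 ≤ δ)
    (k : ℕ) (hk : k ≤ ℓ - 3) :
    ∃ (w : V) (p : G.Walk u₁ w), p.IsPath ∧ p.length = k ∧ v ∉ p.support ∧
      (c s(u₁, v) :: p.edges.map c).Nodup ∧
      (∀ γ ∈ p.edges.map c, (CLx G c v γ).card ≤ s) ∧
      (k = ℓ - 3 → (TZx G c v w).card ≤ K) := by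
  classical
  induction k with
  | zero =>
    refine ⟨u₁, SimpleGraph.Walk.nil, SimpleGraph.Walk.IsPath.nil, rfl, ?_, ?_, ?_, ?_⟩
    · simp [SimpleGraph.Walk.support_nil]
      exact fun h => G.irrefl (h ▸ hu₁)
    · simp
    · simp
    · intro _; exact hT₁
  | succ k ih =>
    obtain ⟨w, p, hpath, hlen, hvsup, hnodup, hclass, _⟩ := ih (by omega)
    -- set up the selection
    set BIG : Finset ℕ := (CSx G c v).filter (fun γ => s + 1 ≤ (CLx G c v γ).card) with hBIG
    set TB : Finset V := if k + 1 = ℓ - 3 then Tbigx G c v K else ∅ with hTB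
    set Q : Finset ℕ := insert (c s(u₁, v)) (p.edges.map c).toFinset ∪ BIG with hQ
    set P : Finset V := insert v p.support.toFinset ∪ TB with hP
    have hBg : BIG.card * s + δ ≤ G.degree v := by
      have h1 := big_classes_bound (G := G) (c := c) v s
      rw [← hBIG] at h1
      have h2 := hδle v
      omega
    have hTb : TB.card * (K + 1) ≤ δ * repNum G c := by
      rw [hTB]
      split
      · calc (Tbigx G c v K).card * (K + 1) ≤ (Zx G c v).card * repNum G c := Tbigx_card v K
          _ ≤ δ * repNum G c := Nat.mul_le_mul_right _ hZδ
      · simp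
    have hQcard : Q.card ≤ (ℓ - 3) + BIG.card := by
      calc Q.card ≤ (insert (c s(u₁, v)) (p.edges.map c).toFinset).card + BIG.card :=
            Finset.card_union_le _ _
        _ ≤ ((p.edges.map c).toFinset.card + 1) + BIG.card := by
            gcongr
            exact Finset.card_insert_le _ _
        _ ≤ (k + 1) + BIG.card := by
            gcongr
            calc (p.edges.map c).toFinset.card ≤ (p.edges.map c).length :=
                  (p.edges.map c).toFinset_card_le
              _ = p.edges.length := List.length_map _
              _ = k := by rw [SimpleGraph.Walk.length_edges, hlen]
        _ ≤ (ℓ - 3) + BIG.card := by omega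
    have hPcard : P.card ≤ (ℓ - 2) + TB.card := by
      calc P.card ≤ (insert v p.support.toFinset).card + TB.card := Finset.card_union_le _ _
        _ ≤ (p.support.toFinset.card + 1) + TB.card := by
            gcongr; exact Finset.card_insert_le _ _
        _ ≤ ((k + 1) + 1) + TB.card := by
            gcongr
            calc p.support.toFinset.card ≤ p.support.length := p.support.toFinset_card_le
              _ = k + 1 := by rw [SimpleGraph.Walk.length_support, hlen]
        _ ≤ (ℓ - 2) + TB.card := by omega
    have hcount : Q.card + P.card < δ := by
      have := hnum BIG.card TB.card hBg hTb
      omega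
    obtain ⟨z, hzW, hzP, hzQ⟩ := engine (G.neighborFinset w) Q P δ (hδle w) hcount
    have hwz : G.Adj w z := (SimpleGraph.mem_neighborFinset _ _ _).1 hzW
    have hzsup : z ∉ p.support := by
      intro h
      exact hzP (Finset.mem_union_left _ (Finset.mem_insert_of_mem (List.mem_toFinset.2 h)))
    have hzv : z ≠ v := by
      intro h
      exact hzP (Finset.mem_union_left _ (h ▸ Finset.mem_insert_self _ _))
    refine ⟨z, p.concat hwz, isPath_concat hpath hwz hzsup, ?_, ?_, ?_, ?_, ?_⟩
    · rw [SimpleGraph.Walk.length_concat, hlen]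
    · rw [SimpleGraph.Walk.support_concat]
      intro h
      rw [List.mem_append] at h
      rcases h with h | h
      · exact hvsup h
      · exact hzv (List.mem_singleton.1 h).symm
    · rw [SimpleGraph.Walk.edges_concat, List.map_concat]
      rw [List.concat_eq_append]
      have hfresh : c s(w, z) ∉ insert (c s(u₁, v)) (p.edges.map c).toFinset := by
        intro h
        apply hzQ
        rw [hQ]
        apply Finset.mem_union_left
        rwa [Sym2.eq_swap (a := w) (b := z)] at h
      simp only [List.nodup_cons, List.nodup_append, List.nodup_singleton] at hnodup ⊢
      constructor
      · intro h
        rcases List.mem_append.1 h with h | h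
        · exact hnodup.1 h
        · apply hfresh
          rw [← List.mem_singleton.1 h]
          exact Finset.mem_insert_self _ _
      · refine ⟨hnodup.2, by simp, ?_⟩
        intro a ha b hb hab
        rw [hab, List.mem_singleton.1 hb] at ha
        exact hfresh (Finset.mem_insert_of_mem (List.mem_toFinset.2 ha))
    · intro γ hγ
      rw [SimpleGraph.Walk.edges_concat, List.map_concat] at hγ
      rw [List.concat_eq_append, List.mem_append] at hγ
      rcases hγ with h | h
      · exact hclass γ h
      · rw [List.mem_singleton.1 h]
        by_cases hmem : c s(w, z) ∈ CSx G c v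
        · by_contra hbig
          apply hzQ
          rw [hQ]
          apply Finset.mem_union_right
          rw [hBIG, Finset.mem_filter]
          rw [Sym2.eq_swap]
          exact ⟨hmem, by omega⟩
        · have : CLx G c v (c s(w, z)) = ∅ := by
            rw [Finset.eq_empty_iff_forall_notMem]
            intro a ha
            obtain ⟨h1, h2⟩ := mem_CLx.1 ha
            exact hmem (mem_CSx.2 ⟨a, h1, h2⟩)
          rw [this]
          simp
    · intro hk1
      have : z ∉ TB := fun h => hzP (Finset.mem_union_right _ h)
      rw [hTB, if_pos hk1] at this
      have h2 : z ∉ univ.filter (fun w' => K < (TZx G c v w').card) := this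
      rw [Finset.mem_filter] at h2
      push_neg at h2
      exact h2 (Finset.mem_univ z)


/-- closing the cycle -/
lemma build_cycle (v u₁ : V) (s K ℓ δ : ℕ) (hl : 3 ≤ ℓ)
    (hδle : ∀ w : V, δ ≤ (CSx G c w).card)
    (hu₁S : u₁ ∈ Singx G c v)
    (hT₁ : (TZx G c v u₁).card ≤ K)
    (hZδ : (Zx G c v).card ≤ δ)
    (hnum : ∀ Bg Tb : ℕ,
      Bg * s + δ ≤ G.degree v → Tb * (K + 1) ≤ δ * repNum G c →
      (ℓ - 3) + Bg + ((ℓ - 2) + Tb) + 1 ≤ δ)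
    (hpool : ∀ w : V, G.degree v - δ ≤
      (((G.neighborFinset w ∩ G.neighborFinset v)).image fun z => c s(z, w)).card)
    (hclose : (1 + (ℓ - 3)) + (((ℓ - 2) + ((1 + (ℓ - 3) * s) + K))) < G.degree v - δ) :
    HasRainbowCycle G c ℓ := by
  classical
  have hu₁ : G.Adj u₁ v := (mem_Singx.1 hu₁S).1
  obtain ⟨w, p, hpath, hlen, hvsup, hnodup, hclass, hTw⟩ :=
    greedy v u₁ s K ℓ δ hδle hu₁ hT₁ hZδ hnum (ℓ - 3) le_rfl
  have hTw' : (TZx G c v w).card ≤ K := hTw rfl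
  set Q : Finset ℕ := insert (c s(u₁, v)) (p.edges.map c).toFinset with hQ
  set W2 : Finset V := Q.biUnion (CLx G c v) with hW2
  set P : Finset V := p.support.toFinset ∪ W2 ∪ TZx G c v w with hP
  have hQcard : Q.card ≤ 1 + (ℓ - 3) := by
    calc Q.card ≤ (p.edges.map c).toFinset.card + 1 := Finset.card_insert_le _ _
      _ ≤ (ℓ - 3) + 1 := by
          gcongr
          calc (p.edges.map c).toFinset.card ≤ (p.edges.map c).length :=
                (p.edges.map c).toFinset_card_le
            _ = p.edges.length := List.length_map _
            _ = ℓ - 3 := by rw [SimpleGraph.Walk.length_edges, hlen]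
      _ = 1 + (ℓ - 3) := by omega
  have hW2card : W2.card ≤ (1 + (ℓ - 3) * s) := by
    have hγ₀ : c s(u₁, v) ∉ (p.edges.map c).toFinset := by
      intro h
      exact (List.nodup_cons.1 hnodup).1 (List.mem_toFinset.1 h)
    calc W2.card ≤ ∑ γ ∈ Q, (CLx G c v γ).card := Finset.card_biUnion_le
      _ = (CLx G c v (c s(u₁, v))).card + ∑ γ ∈ (p.edges.map c).toFinset, (CLx G c v γ).card := by
          rw [hQ, Finset.sum_insert hγ₀]
      _ ≤ 1 + (ℓ - 3) * s := by
          gcongr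
          · rw [Singx_class_eq hu₁S, Finset.card_singleton]
          · calc ∑ γ ∈ (p.edges.map c).toFinset, (CLx G c v γ).card
                ≤ ∑ _γ ∈ (p.edges.map c).toFinset, s := by
                  apply Finset.sum_le_sum
                  intro γ hγ
                  exact hclass γ (List.mem_toFinset.1 hγ)
              _ = (p.edges.map c).toFinset.card * s := by rw [Finset.sum_const, smul_eq_mul]
              _ ≤ (ℓ - 3) * s := by
                  gcongr
                  calc (p.edges.map c).toFinset.card ≤ (p.edges.map c).length :=
                        (p.edges.map c).toFinset_card_le
                    _ = p.edges.length := List.length_map _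
                    _ = ℓ - 3 := by rw [SimpleGraph.Walk.length_edges, hlen]
  have hPcard : P.card ≤ (ℓ - 2) + ((1 + (ℓ - 3) * s) + K) := by
    calc P.card ≤ (p.support.toFinset ∪ W2).card + (TZx G c v w).card := Finset.card_union_le _ _
      _ ≤ (p.support.toFinset.card + W2.card) + (TZx G c v w).card := by
          gcongr; exact Finset.card_union_le _ _
      _ ≤ ((ℓ - 2) + (1 + (ℓ - 3) * s)) + K := by
          gcongr
          calc p.support.toFinset.card ≤ p.support.length := p.support.toFinset_card_le
            _ = (ℓ - 3) + 1 := by rw [SimpleGraph.Walk.length_support, hlen]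
            _ ≤ ℓ - 2 := by omega
      _ = (ℓ - 2) + ((1 + (ℓ - 3) * s) + K) := by omega
  have hcount : Q.card + P.card < G.degree v - δ := by omega
  obtain ⟨z, hzW, hzP, hzQ⟩ := engine (G.neighborFinset w ∩ G.neighborFinset v) Q P
    (G.degree v - δ) (hpool w) hcount
  obtain ⟨hzw, hzv⟩ := Finset.mem_inter.1 hzW
  have hwz : G.Adj w z := (SimpleGraph.mem_neighborFinset _ _ _).1 hzw
  have hvz : G.Adj v z := (SimpleGraph.mem_neighborFinset _ _ _).1 hzv
  have hzsup : z ∉ p.support := by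
    intro h
    exact hzP (Finset.mem_union_left _ (Finset.mem_union_left _ (List.mem_toFinset.2 h)))
  have hwv : w ≠ v := by
    intro h
    exact hvsup (h ▸ p.end_mem_support)
  -- the closing colors
  have hβQ : c s(w, z) ∉ Q := by rwa [Sym2.eq_swap (a := z) (b := w)] at hzQ
  have hγQ : c s(v, z) ∉ Q := by
    intro h
    apply hzP
    apply Finset.mem_union_left
    apply Finset.mem_union_right
    rw [hW2]
    apply Finset.mem_biUnion.2
    exact ⟨c s(v, z), h, mem_CLx.2 ⟨hvz.symm, by rw [Sym2.eq_swap (a := z) (b := v)]⟩⟩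
  have hγβ : c s(v, z) ≠ c s(w, z) := by
    intro h
    by_cases hZ : z ∈ Zx G c v
    · apply hzP
      apply Finset.mem_union_right
      rw [TZx, Finset.mem_filter]
      exact ⟨hZ, hwz, h.symm⟩
    · rw [mem_Zx] at hZ
      push_neg at hZ
      have hcard1 := hZ hvz
      have hvmem : v ∈ CLx G c z (c s(v, z)) := mem_CLx.2 ⟨hvz, rfl⟩
      have hwmem : w ∈ CLx G c z (c s(v, z)) := mem_CLx.2 ⟨hwz, h.symm⟩
      obtain ⟨a, ha⟩ := Finset.card_eq_one.1 hcard1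
      rw [ha, Finset.mem_singleton] at hvmem hwmem
      exact hwv (hwmem.trans hvmem.symm)
  -- build the cycle
  have hzvadj : G.Adj z v := hvz.symm
  set cyc : G.Walk v v := SimpleGraph.Walk.cons hu₁.symm ((p.concat hwz).concat hzvadj) with hcyc
  have hedges : cyc.edges = s(v, u₁) :: ((p.edges.concat s(w, z)).concat s(z, v)) := by
    rw [hcyc, SimpleGraph.Walk.edges_cons, SimpleGraph.Walk.edges_concat,
      SimpleGraph.Walk.edges_concat]
  have hcolors : cyc.edges.map c =
      c s(u₁, v) :: ((p.edges.map c ++ [c s(w, z)]) ++ [c s(v, z)]) := by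
    rw [hedges]
    simp only [List.map_cons, List.concat_eq_append, List.map_append, List.map_singleton,
      List.map_nil]
    rw [Sym2.eq_swap (a := v) (b := u₁), Sym2.eq_swap (a := z) (b := v)]
  have hγ₀mem : ∀ γ ∈ Q, γ = c s(u₁, v) ∨ γ ∈ p.edges.map c := by
    intro γ hγ
    rcases Finset.mem_insert.1 hγ with h | h
    · exact Or.inl h
    · exact Or.inr (List.mem_toFinset.1 h)
  have hnodupall : (cyc.edges.map c).Nodup := by
    rw [hcolors]
    have hβ : c s(w, z) ∉ insert (c s(u₁, v)) (p.edges.map c).toFinset := hβQ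
    have hγ : c s(v, z) ∉ insert (c s(u₁, v)) (p.edges.map c).toFinset := hγQ
    rw [Finset.mem_insert] at hβ hγ
    push_neg at hβ hγ
    rw [List.mem_toFinset] at hβ hγ
    have hA : (p.edges.map c).Nodup := (List.nodup_cons.1 hnodup).2
    have hγ₀A : c s(u₁, v) ∉ p.edges.map c := (List.nodup_cons.1 hnodup).1
    have rest1 : (p.edges.map c ++ [c s(w, z)]).Nodup := by
      rw [← List.concat_eq_append]
      exact List.Nodup.concat hβ.2 hA
    have rest2 : ((p.edges.map c ++ [c s(w, z)]) ++ [c s(v, z)]).Nodup := by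
      rw [← List.concat_eq_append]
      apply List.Nodup.concat _ rest1
      rw [List.mem_append, List.mem_singleton]
      rintro (h | h)
      · exact hγ.2 h
      · exact hγβ h
    apply List.nodup_cons.2
    refine ⟨?_, rest2⟩
    rw [List.mem_append, List.mem_append, List.mem_singleton, List.mem_singleton]
    rintro ((h | h) | h)
    · exact hγ₀A h
    · exact hβ.1 h.symm
    · exact hγ.1 h.symm
  refine ⟨v, cyc, ?_, ?_, hnodupall⟩
  · -- IsCycle
    refine ⟨⟨⟨?_⟩, by simp [hcyc]⟩, ?_⟩
    · exact List.Nodup.of_map c hnodupall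
    · -- support tail nodup
      have hsupp : cyc.support = v :: ((p.support.concat z).concat v) := by
        rw [hcyc, SimpleGraph.Walk.support_cons, SimpleGraph.Walk.support_concat,
          SimpleGraph.Walk.support_concat]
        simp [List.concat_eq_append]
      rw [hsupp]
      simp only [List.tail_cons]
      apply List.Nodup.concat
      · rw [List.concat_eq_append, List.mem_append, List.mem_singleton]
        rintro (h | h)
        · exact hvsup h
        · exact G.irrefl (h ▸ hvz)
      · apply List.Nodup.concat hzsup hpath.support_nodup
  · -- length
    rw [hcyc, SimpleGraph.Walk.length_cons, SimpleGraph.Walk.length_concat,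
      SimpleGraph.Walk.length_concat, hlen]
    omega


lemma Zx_subset_Singx [Nonempty V] (hmin : EdgeMinimal G c) (v : V) :
    Zx G c v ⊆ Singx G c v := by
  intro z hz
  obtain ⟨hadj, hcard⟩ := mem_Zx.1 hz
  rcases dichotomy hmin hadj with ⟨_, h2⟩ | ⟨_, h2⟩
  · rw [mem_Singx]
    refine ⟨hadj.symm, ?_⟩
    rwa [Sym2.eq_swap (a := z) (b := v)]
  · exact absurd h2 hcard

lemma Zx_card_le [Nonempty V] (hmin : EdgeMinimal G c) (v : V) :
    (Zx G c v).card ≤ minColorDeg G c := by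
  rcases Finset.eq_empty_or_nonempty (Zx G c v) with h | h
  · rw [h]; simp
  · obtain ⟨z, hz⟩ := h
    obtain ⟨hadj, hcard⟩ := mem_Zx.1 hz
    have hdeg : colorDeg G c v = minColorDeg G c := by
      rcases dichotomy hmin hadj with ⟨h1, _⟩ | ⟨_, h2⟩
      · exact h1
      · exact absurd h2 hcard
    calc (Zx G c v).card ≤ (Singx G c v).card :=
          Finset.card_le_card (Zx_subset_Singx hmin v)
      _ ≤ (CSx G c v).card := Singx_card_le_CSx v
      _ = minColorDeg G c := by rw [← colorDeg_eq_card, hdeg]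

lemma exists_u₁ [Nonempty V] (hmin : EdgeMinimal G c) (v : V) (K δ : ℕ)
    (hK : repNum G c ≤ K)
    (hq : δ ≤ (CSx G c v).card)
    (hd : G.degree v + 1 ≤ 2 * δ) :
    ∃ u₁, u₁ ∈ Singx G c v ∧ (TZx G c v u₁).card ≤ K := by
  classical
  have hSne : (Singx G c v).Nonempty := by
    rw [← Finset.card_pos]
    have := Singx_card_bound (G := G) (c := c) v
    omega
  by_contra hcon
  push_neg at hcon
  have h1 : (repNum G c + 1) * (Singx G c v).card ≤ ∑ u ∈ Singx G c v, (TZx G c v u).card := by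
    have h := Finset.card_nsmul_le_sum (Singx G c v) (fun u => (TZx G c v u).card)
      (repNum G c + 1) (fun u hu =>
        Nat.succ_le_of_lt (Nat.lt_of_le_of_lt hK (hcon u hu)))
    rw [mul_comm]
    simpa [smul_eq_mul] using h
  have h2 : ∑ u ∈ Singx G c v, (TZx G c v u).card ≤ (Singx G c v).card * repNum G c := by
    calc ∑ u ∈ Singx G c v, (TZx G c v u).card ≤ ∑ u : V, (TZx G c v u).card :=
          Finset.sum_le_sum_of_subset (Finset.subset_univ _)
      _ ≤ (Zx G c v).card * repNum G c := TZx_total v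
      _ ≤ (Singx G c v).card * repNum G c :=
          Nat.mul_le_mul_right _ (Finset.card_le_card (Zx_subset_Singx hmin v))
  have h3 : 1 ≤ (Singx G c v).card := Finset.card_pos.2 hSne
  nlinarith [h1, h2, h3]

/-- the main contradiction -/
lemma main_aux [Nonempty V] (hmin : EdgeMinimal G c) (ℓ : ℕ) (hl : 3 ≤ ℓ)
    (hno : ¬ HasRainbowCycle G c ℓ)
    (hbud : 5 * repNum G c + 27 * ℓ ≤ minColorDeg G c)
    (hn : Fintype.card V ≤ 2 * minColorDeg G c)
    (v : V) (hd : minColorDeg G c + 4 * repNum G c + 3 * ℓ ≤ G.degree v) : False := by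
  classical
  set δ := minColorDeg G c with hδ
  set R := repNum G c with hR
  set d := G.degree v with hdd
  have hδle : ∀ w : V, δ ≤ (CSx G c w).card := by
    intro w
    rw [← colorDeg_eq_card]
    exact minColorDeg_le w
  have hdn : d + 1 ≤ 2 * δ := by
    have := G.degree_lt_card_verts v
    omega
  have hRpos : 1 ≤ R := by
    have hdpos : 0 < d := by omega
    rw [hdd, SimpleGraph.degree] at hdpos
    obtain ⟨u₀, hu₀⟩ := Finset.card_pos.1 hdpos
    have h1 : u₀ ∈ CLx G c v (c s(u₀, v)) :=
      mem_CLx.2 ⟨((SimpleGraph.mem_neighborFinset _ _ _).1 hu₀).symm, rfl⟩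
    have h2 := CLx_card_le_repNum (G := G) (c := c) v (c s(u₀, v))
    have h3 : 0 < (CLx G c v (c s(u₀, v))).card := Finset.card_pos.2 ⟨u₀, h1⟩
    omega
  have hZδ : (Zx G c v).card ≤ δ := Zx_card_le hmin v
  have hpool : ∀ w : V, d - δ ≤
      (((G.neighborFinset w ∩ G.neighborFinset v)).image fun z => c s(z, w)).card := by
    intro w
    have h1 := pool_bound (G := G) (c := c) v w
    have h2 := hδle w
    omega
  by_cases hcase : 2 * (d - δ) ≤ δ
  · -- small case : s = 1, K = 4R
    obtain ⟨u₁, hu₁S, hu₁T⟩ := exists_u₁ hmin v (4 * R) δ (by omega) (hδle v) hdn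
    apply hno
    apply build_cycle v u₁ 1 (4 * R) ℓ δ hl hδle hu₁S hu₁T hZδ ?_ hpool ?_
    · intro Bg Tb h1 h2
      have h4Tb : 4 * Tb ≤ δ := by
        have e5 : (4 * Tb) * (4 * R + 1) ≤ δ * (4 * R + 1) := by
          calc (4 * Tb) * (4 * R + 1) = 4 * (Tb * (4 * R + 1)) := by ring
            _ ≤ 4 * (δ * R) := Nat.mul_le_mul_left 4 h2
            _ = δ * (4 * R) := by ring
            _ ≤ δ * (4 * R + 1) := Nat.mul_le_mul_left δ (by omega)
        exact Nat.le_of_mul_le_mul_right e5 (by omega)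
      omega
    · omega
  · -- big case : s = 6, K = (d - δ) - 9ℓ
    push_neg at hcase
    have hK : R ≤ (d - δ) - 9 * ℓ := by omega
    obtain ⟨u₁, hu₁S, hu₁T⟩ := exists_u₁ hmin v ((d - δ) - 9 * ℓ) δ hK (hδle v) hdn
    apply hno
    apply build_cycle v u₁ 6 ((d - δ) - 9 * ℓ) ℓ δ hl hδle hu₁S hu₁T hZδ ?_ hpool ?_
    · intro Bg Tb h1 h2
      have h2Tb : 2 * Tb ≤ δ := by
        have hK2 : 2 * R ≤ (d - δ) - 9 * ℓ := by omega
        have e2 : (2 * Tb) * R ≤ δ * R := by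
          calc (2 * Tb) * R = Tb * (2 * R) := by ring
            _ ≤ Tb * ((d - δ) - 9 * ℓ + 1) := Nat.mul_le_mul_left Tb (by omega)
            _ ≤ δ * R := h2
        exact Nat.le_of_mul_le_mul_right e2 (by omega)
      omega
    · omega

end Aux2

theorem stmt10 (ℓ : ℕ) (hl : 3 ≤ ℓ) [Fintype V] (G : SimpleGraph V)
    [DecidableRel G.Adj] (c : Sym2 V → ℕ)
    (hmin : EdgeMinimal G c) (hno : ¬ HasRainbowCycle G c ℓ)
    (hδ : 5 * repNum G c + 27 * ℓ ≤ minColorDeg G c) :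
    (minColorDeg G c : ℚ) < (Fintype.card V : ℚ) / 2 ∨
      G.maxDegree < minColorDeg G c + 4 * repNum G c + 3 * ℓ := by
  by_contra hcon
  push_neg at hcon
  obtain ⟨h1, h2⟩ := hcon
  have hNE : Nonempty V := by
    by_contra hemp
    rw [not_nonempty_iff] at hemp
    have h0 : minColorDeg G c = 0 := by
      rw [minColorDeg, iInf, Set.range_eq_empty, Nat.sInf_empty]
    omega
  have hn : Fintype.card V ≤ 2 * minColorDeg G c := by
    have h3 : (Fintype.card V : ℚ) ≤ 2 * (minColorDeg G c : ℚ) := by linarith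
    exact_mod_cast h3
  obtain ⟨v, hv⟩ := G.exists_maximal_degree_vertex
  have hd : minColorDeg G c + 4 * repNum G c + 3 * ℓ ≤ G.degree v := by omega
  exact absurd (main_aux hmin ℓ hl hno hδ hn v hd) (by simp)
end

section
/- Let (G,c) be an edge-colored graph with no rainbow ℓ-cycle, and suppose P is a rainbow path on ℓ−1 vertices from v to y whose edge colors avoid the set C_rep of colors repeating from v into X ⊆ N(v). Then for every x ∈ N(y) ∩ X, at least one of the following holds: (A) x lies on P; (B) c({x,y}) appears on an edge of P; (C) c({v,x}) appears on an edge of P; (D) c({x,y}) = c({v,x}). -/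
open Finset

variable {V : Type*}

theorem hasRainbowCycle_of_closing_rainbow_path {G : SimpleGraph V} {c : Sym2 V → ℕ} {v y x : V}
    (p : G.Walk v y) (hp : p.IsPath) (hrb : (p.edges.map c).Nodup)
    (hvx : G.Adj v x) (hxy : G.Adj x y) (hxp : x ∉ p.support)
    (hcxy : c s(x, y) ∉ p.edges.map c) (hcvx : c s(v, x) ∉ p.edges.map c)
    (hne : c s(x, y) ≠ c s(v, x)) :
    HasRainbowCycle G c (p.length + 2) := by
  have hvx_edge : s(v, x) ∉ (SimpleGraph.Walk.cons hxy p.reverse).edges := by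
    simp only [SimpleGraph.Walk.edges_cons, SimpleGraph.Walk.edges_reverse, List.mem_cons,
      List.mem_reverse, not_or]
    exact ⟨fun h => hne (congrArg c h).symm, fun h => hcvx (List.mem_map_of_mem h)⟩
  refine ⟨v, .cons hvx (.cons hxy p.reverse), ?_, ?_, ?_⟩
  · rw [SimpleGraph.Walk.cons_isCycle_iff]
    exact ⟨hp.reverse.cons (by simpa using hxp), hvx_edge⟩
  · simp only [SimpleGraph.Walk.length_cons, SimpleGraph.Walk.length_reverse]
  · simp only [SimpleGraph.Walk.edges_cons, SimpleGraph.Walk.edges_reverse, List.map_cons,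
      List.map_reverse, List.nodup_cons, List.mem_cons, List.mem_reverse, List.nodup_reverse]
    exact ⟨not_or.mpr ⟨hne.symm, hcvx⟩, hcxy, hrb⟩

theorem stmt14_general (ℓ : ℕ) (G : SimpleGraph V) (c : Sym2 V → ℕ)
    (hno : ¬ HasRainbowCycle G c ℓ)
    (v y : V) (X : Set V) (hX : X ⊆ G.neighborSet v)
    (p : G.Walk v y) (hp : p.IsPath) (hlen : p.length + 1 = ℓ - 1)
    (hrb : (p.edges.map c).Nodup)
    (x : V) (hxX : x ∈ X) (hxy : G.Adj x y) :
    x ∈ p.support ∨ c s(x, y) ∈ p.edges.map c ∨ c s(v, x) ∈ p.edges.map c ∨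
      c s(x, y) = c s(v, x) := by
  by_contra! h
  obtain ⟨hxp, hcxy, hcvx, hne⟩ := h
  have hcycle := hasRainbowCycle_of_closing_rainbow_path p hp hrb (hX hxX) hxy hxp hcxy hcvx hne
  rw [show p.length + 2 = ℓ by omega] at hcycle
  exact hno hcycle

theorem stmt14 (ℓ : ℕ) (hl : 3 ≤ ℓ) (G : SimpleGraph V) (c : Sym2 V → ℕ)
    (hno : ¬ HasRainbowCycle G c ℓ)
    (v y : V) (X : Set V) (hX : X ⊆ G.neighborSet v)
    (p : G.Walk v y) (hp : p.IsPath) (hlen : p.length + 1 = ℓ - 1)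
    (hrb : (p.edges.map c).Nodup)
    (havoid : ∀ e ∈ p.edges, c e ∉ {α : ℕ | 1 < Set.ncard {x ∈ X | c s(v, x) = α}})
    (x : V) (hxX : x ∈ X) (hxy : G.Adj x y) :
    x ∈ p.support ∨ c s(x, y) ∈ p.edges.map c ∨ c s(v, x) ∈ p.edges.map c ∨
      c s(x, y) = c s(v, x) :=
  stmt14_general ℓ G c hno v y X hX p hp hlen hrb x hxX hxy
end

section
/- Let (G,c) be an edge-minimal edge-colored graph. Then no triangle in G is monochromatic, i.e., for every triangle with vertex set {u,v,w} in G, the colors c({u,v}), c({v,w}), c({u,w}) are not all equal. -/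
open Finset

variable {V : Type*}

/- Deleting an edge `uw` whose color also appears on another edge at `u` and on another edge
at `w` loses no color at any vertex, so it keeps `δ^c`; edge-minimality forbids such an edge.
In a monochromatic triangle `uvw` the edges `uv` and `vw` play that role for `uw`. -/

section

open SimpleGraph

variable {G : SimpleGraph V} {c : Sym2 V → ℕ} {u w : V}

theorem colorDeg_deleteEdges_singleton_of_replicated
    (hu : ∃ a, G.Adj a u ∧ a ≠ w ∧ c s(a, u) = c s(u, w))
    (hw : ∃ b, G.Adj b w ∧ b ≠ u ∧ c s(b, w) = c s(u, w)) (x : V) :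
    colorDeg (G.deleteEdges {s(u, w)}) c x = colorDeg G c x := by
  obtain ⟨a, hau, haw, hca⟩ := hu
  obtain ⟨b, hbw, hbu, hcb⟩ := hw
  unfold colorDeg
  congr 1
  ext α
  simp only [Set.mem_ofPred_eq, deleteEdges_adj, Set.mem_singleton_iff]
  constructor
  · rintro ⟨y, ⟨hyx, -⟩, rfl⟩
    exact ⟨y, hyx, rfl⟩
  · rintro ⟨y, hyx, rfl⟩
    by_cases he : s(y, x) = s(u, w)
    · rcases Sym2.eq_iff.mp he with ⟨rfl, rfl⟩ | ⟨rfl, rfl⟩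
      · exact ⟨b, ⟨hbw, by simp [hbu, hbw.ne]⟩, hcb⟩
      · exact ⟨a, ⟨hau, by simp [haw, hau.ne]⟩, by rw [hca, Sym2.eq_swap]⟩
    · exact ⟨y, ⟨hyx, he⟩, rfl⟩

theorem EdgeMinimal.not_replicated (hmin : EdgeMinimal G c) (huw : G.Adj u w)
    (hu : ∃ a, G.Adj a u ∧ a ≠ w ∧ c s(a, u) = c s(u, w))
    (hw : ∃ b, G.Adj b w ∧ b ≠ u ∧ c s(b, w) = c s(u, w)) : False := by
  have hne : G.deleteEdges {s(u, w)} ≠ G := by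
    rw [Ne, deleteEdges_eq_self, Set.disjoint_singleton_right]
    exact not_not.mpr huw
  refine hmin _ (deleteEdges_le _) hne ?_
  unfold minColorDeg
  simp only [colorDeg_deleteEdges_singleton_of_replicated hu hw]

end

theorem stmt16 (G : SimpleGraph V) (c : Sym2 V → ℕ) (hmin : EdgeMinimal G c)
    (u v w : V) (huv : G.Adj u v) (hvw : G.Adj v w) (huw : G.Adj u w) :
    ¬ (c s(u, v) = c s(v, w) ∧ c s(v, w) = c s(u, w)) := by
  rintro ⟨h₁, h₂⟩
  refine hmin.not_replicated huw ⟨v, huv.symm, hvw.ne, ?_⟩ ⟨v, hvw, huv.ne', h₂⟩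
  rw [Sym2.eq_swap, h₁, h₂]
end
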